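/- arXiv:1602.04505 — 3 statements merged into one kernel-verified Lean document; each statement's English description precedes it below -/
import Mathlib

section
/- Every finite simple graph G has a tree decomposition (T,β) of adhesion at most 3 such that for every node t of T the torso G⟦β(t)⟧ is a minor of G and is either quasi-4-connected or a complete graph on at most 4 vertices. -/
variable {V : Type*} {W : Type*}

/-- A separation (Y,S,Z) of a graph: pairwise disjoint sets covering the vertex set,
with no edge between Y and Z. -/
def IsSeparation (G : SimpleGraph V) (Y S Z : Set V) : Prop :=
  Disjoint Y S ∧ Disjoint Y Z ∧ Disjoint S Z ∧ Y ∪ S ∪ Z = Set.univ ∧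
    ∀ y ∈ Y, ∀ z ∈ Z, ¬ G.Adj y z

/-- `G` is `k`-connected: more than `k` vertices and no proper separation of order `< k`. -/
def KConnected (k : ℕ) (G : SimpleGraph V) : Prop :=
  k < Nat.card V ∧
    ∀ Y S Z : Set V, IsSeparation G Y S Z → Y.Nonempty → Z.Nonempty → k ≤ S.ncard

/-- `G` is quasi-4-connected. -/
def Quasi4Connected (G : SimpleGraph V) : Prop :=
  KConnected 3 G ∧
    ∀ Y S Z : Set V, IsSeparation G Y S Z → S.ncard = 3 → Y.ncard ≤ 1 ∨ Z.ncard ≤ 1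

/-- `T` is a `G`-tangle of order `k`. -/
def IsTangle (G : SimpleGraph V) (k : ℕ) (T : Set (Set V × Set V × Set V)) : Prop :=
  (∀ p ∈ T, IsSeparation G p.1 p.2.1 p.2.2 ∧ p.2.1.ncard < k) ∧
  (∀ Y S Z : Set V, IsSeparation G Y S Z → S.ncard < k →
    (Y, S, Z) ∈ T ∨ (Z, S, Y) ∈ T) ∧
  (∀ p₁ ∈ T, ∀ p₂ ∈ T, ∀ p₃ ∈ T,
    (p₁.2.2 ∩ p₂.2.2 ∩ p₃.2.2 : Set V).Nonempty ∨
      ∃ u v : V, G.Adj u v ∧ (u ∈ p₁.2.2 ∨ v ∈ p₁.2.2) ∧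
        (u ∈ p₂.2.2 ∨ v ∈ p₂.2.2) ∧ (u ∈ p₃.2.2 ∨ v ∈ p₃.2.2)) ∧
  (∀ p ∈ T, (p.2.2 : Set V).Nonempty)

/-- The order `⪯` on separations: (Y,S,Z) ⪯ (Y',S',Z') iff S ∪ Z ⊊ S' ∪ Z', or
S ∪ Z = S' ∪ Z' and S ⊆ S'. -/
def SepLE (p q : Set V × Set V × Set V) : Prop :=
  p.2.1 ∪ p.2.2 ⊂ q.2.1 ∪ q.2.2 ∨
    (p.2.1 ∪ p.2.2 = q.2.1 ∪ q.2.2 ∧ p.2.1 ⊆ q.2.1)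

/-- `p` is a `⪯`-minimal element of `T`. -/
def IsMinimalIn (T : Set (Set V × Set V × Set V)) (p : Set V × Set V × Set V) : Prop :=
  p ∈ T ∧ ∀ q ∈ T, SepLE q p → q = p

/-- Two separations are orthogonal. (They cross if they are not orthogonal.) -/
def SepOrthogonal (p q : Set V × Set V × Set V) : Prop :=
  (p.1 ∪ p.2.1) ∩ (q.1 ∪ q.2.1) ⊆ p.2.1 ∩ q.2.1

/-- A separation (Y,S,Z) is degenerate: |Y| = 1 and S is an independent set. -/
def Degenerate (G : SimpleGraph V) (Y S Z : Set V) : Prop :=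
  Y.ncard = 1 ∧ ∀ u ∈ S, ∀ v ∈ S, ¬ G.Adj u v

/-- The neighbourhood N(X): vertices outside X adjacent to a vertex of X. -/
def Nbhd (G : SimpleGraph V) (X : Set V) : Set V :=
  {v | v ∉ X ∧ ∃ u ∈ X, G.Adj u v}

/-- `C` is (the vertex set of) a connected component of `G − X`. -/
def IsCompOutside (G : SimpleGraph V) (X C : Set V) : Prop :=
  C ⊆ Xᶜ ∧ (G.induce C).Connected ∧ ∀ u ∈ C, ∀ v : V, v ∉ X → G.Adj u v → v ∈ C

/-- The torso `G⟦X⟧` of `X` in `G`. -/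
def torso (G : SimpleGraph V) (X : Set V) : SimpleGraph X where
  Adj u v := u ≠ v ∧ (G.Adj (u : V) (v : V) ∨
    ∃ C : Set V, IsCompOutside G X C ∧ (u : V) ∈ Nbhd G C ∧ (v : V) ∈ Nbhd G C)
  symm := by
    constructor
    rintro u v ⟨hne, h | ⟨C, hC, hu, hv⟩⟩
    · exact ⟨hne.symm, Or.inl h.symm⟩
    · exact ⟨hne.symm, Or.inr ⟨C, hC, hv, hu⟩⟩
  loopless := by
    constructor
    intro u h
    exact h.1 rfl

/-- `H` is a minor of `G`. -/
def IsMinor (H : SimpleGraph W) (G : SimpleGraph V) : Prop :=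
  ∃ M : W → Set V,
    (∀ w : W, (G.induce (M w)).Connected) ∧
    (Pairwise fun w w' : W => Disjoint (M w) (M w')) ∧
    ∀ w w' : W, H.Adj w w' → ∃ u ∈ M w, ∃ v ∈ M w', G.Adj u v

/-- `M` is a faithful model of the graph `H` (with vertex set `X ⊆ V(G)`) in `G`. -/
def FaithfulModel (G : SimpleGraph V) (X : Set V) (H : SimpleGraph X)
    (M : X → Set V) : Prop :=
  (∀ w : X, (w : V) ∈ M w) ∧
  (∀ w : X, (G.induce (M w)).Connected) ∧
  (Pairwise fun w w' : X => Disjoint (M w) (M w')) ∧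
  ∀ w w' : X, H.Adj w w' → ∃ u ∈ M w, ∃ v ∈ M w', G.Adj u v

/-- `H` (a graph with vertex set `X ⊆ V(G)`) is a faithful minor of `G`. -/
def IsFaithfulMinor (G : SimpleGraph V) (X : Set V) (H : SimpleGraph X) : Prop :=
  ∃ M : X → Set V, FaithfulModel G X H M

/-- The projection of a separation of `G` to a minor with model `M`. -/
def projSep {X : Set V} (M : X → Set V) (p : Set V × Set V × Set V) :
    Set X × Set X × Set X :=
  ({w : X | M w ⊆ p.1}, {w : X | (M w ∩ p.2.1).Nonempty}, {w : X | M w ⊆ p.2.2})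

/-- The graph TH₊₃: vertices 0,1,2,3 are v₁,v₂,v₃,v₄ (pairwise adjacent); 4,5,6 are
w₁,w₂,w₃ with w₁ ~ v₁,v₂,v₃, w₂ ~ v₁,v₂,v₄, w₃ ~ v₁,v₃,v₄. -/
def TH3 : SimpleGraph (Fin 7) :=
  SimpleGraph.fromRel (fun u v =>
    (u.val < 4 ∧ v.val < 4) ∨
    (u.val = 4 ∧ (v.val = 0 ∨ v.val = 1 ∨ v.val = 2)) ∨
    (u.val = 5 ∧ (v.val = 0 ∨ v.val = 1 ∨ v.val = 3)) ∨
    (u.val = 6 ∧ (v.val = 0 ∨ v.val = 2 ∨ v.val = 3)))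

/-- The graph TR₊₃: vertices 0,1,2 are v₁,v₂,v₃ (pairwise adjacent); 3,4,5 are
w₁,w₂,w₃, each adjacent to each of v₁,v₂,v₃. -/
def TR3 : SimpleGraph (Fin 6) :=
  SimpleGraph.fromRel (fun u v =>
    (u.val < 3 ∧ v.val < 3) ∨ (3 ≤ u.val ∧ v.val < 3))

/-- A graph is exceptional if it embeds (injectively, preserving adjacency)
into TH₊₃ or into TR₊₃. -/
def Exceptional (H : SimpleGraph W) : Prop :=
  (∃ f : W → Fin 7, Function.Injective f ∧ ∀ u v : W, H.Adj u v → TH3.Adj (f u) (f v)) ∨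
  (∃ f : W → Fin 6, Function.Injective f ∧ ∀ u v : W, H.Adj u v → TR3.Adj (f u) (f v))

/-- `X` is a `k`-inseparable set of `G`. -/
def KInseparable (G : SimpleGraph V) (k : ℕ) (X : Set V) : Prop :=
  k < X.ncard ∧
    ¬ ∃ Y S Z : Set V, IsSeparation G Y S Z ∧ S.ncard ≤ k ∧
      (X ∩ Y).Nonempty ∧ (X ∩ Z).Nonempty

/-- A triconnected region: a maximal 2-inseparable set of size ≥ 4. -/
def TriconnectedRegion (G : SimpleGraph V) (R : Set V) : Prop :=
  KInseparable G 2 R ∧ 4 ≤ R.ncard ∧ ∀ R' : Set V, R ⊂ R' → ¬ KInseparable G 2 R'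

/-- `H` is a topological subgraph of `G`. -/
def IsTopologicalSubgraph (H : SimpleGraph W) (G : SimpleGraph V) : Prop :=
  ∃ (φ : W → V) (P : ∀ u v : W, H.Adj u v → G.Walk (φ u) (φ v)),
    Function.Injective φ ∧
    (∀ u v (h : H.Adj u v), (P u v h).IsPath) ∧
    (∀ u v (h : H.Adj u v), P u v h = (P v u h.symm).reverse) ∧
    (∀ u v (h : H.Adj u v), ∀ x ∈ (P u v h).support,
      x ∈ Set.range φ → x = φ u ∨ x = φ v) ∧
    (∀ u v (h : H.Adj u v), ∀ u' v' (h' : H.Adj u' v'), s(u, v) ≠ s(u', v') →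
      ∀ x ∈ (P u v h).support, x ∈ (P u' v' h').support →
        (x = φ u ∨ x = φ v) ∧ (x = φ u' ∨ x = φ v'))

/-- A quasi-4-connected region of a 3-connected graph. -/
def Quasi4Region (G : SimpleGraph V) (R : Set V) : Prop :=
  IsFaithfulMinor G R (torso G R) ∧ Quasi4Connected (torso G R) ∧
    ∀ C : Set V, IsCompOutside G R C → (Nbhd G C).ncard = 3

/-- A split vertex of a separation (Y₀,S₀,Z₀). -/
def SplitVertex (G : SimpleGraph V) (S₀ Z₀ : Set V) (z : V) : Prop :=
  z ∈ Z₀ ∧ ∀ C : Set V, IsCompOutside G (S₀ ∪ {z}) C → (Nbhd G C).ncard = 3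

/-- The graph obtained from `G` by contracting the edge `s₁s₂` onto `s₁`. -/
def contractEdge (G : SimpleGraph V) (s₁ s₂ : V) : SimpleGraph ({s₂}ᶜ : Set V) where
  Adj u v := u ≠ v ∧ (G.Adj (u : V) (v : V) ∨
    ((u : V) = s₁ ∧ G.Adj (v : V) s₂) ∨ ((v : V) = s₁ ∧ G.Adj (u : V) s₂))
  symm := by
    constructor
    rintro u v ⟨hne, h | h | h⟩
    · exact ⟨hne.symm, Or.inl h.symm⟩
    · exact ⟨hne.symm, Or.inr (Or.inr h)⟩
    · exact ⟨hne.symm, Or.inr (Or.inl h)⟩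
  loopless := by
    constructor
    intro u h
    exact h.1 rfl

/-- `s t` are the endvertices of a crossedge of two crossing non-degenerate minimal
separations of the tangle `T`, with `s ∈ S₁` and `t ∈ S₂`. -/
def IsNondegCrossedge (G : SimpleGraph V) (T : Set (Set V × Set V × Set V))
    (s t : V) : Prop :=
  ∃ p q : Set V × Set V × Set V,
    IsMinimalIn T p ∧ IsMinimalIn T q ∧
    ¬ Degenerate G p.1 p.2.1 p.2.2 ∧ ¬ Degenerate G q.1 q.2.1 q.2.2 ∧
    ¬ SepOrthogonal p q ∧ G.Adj s t ∧ p.2.1 ∩ q.1 = {s} ∧ q.2.1 ∩ p.1 = {t}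


/-!
Induct on sets `X ⊆ V(G)` whose torso `G⟦X⟧` has a model in `G` with every `v ∈ X` in its own
branch set; `X = V(G)` with singleton branch sets is the case of the theorem. If `G⟦X⟧` is
quasi-4-connected or complete on at most four vertices, one bag suffices. Otherwise take a
proper separation of `G⟦X⟧` of minimum order `|S| ≤ 3`, with sides of at least two vertices if
`|S| = 3`. By minimality every component of `G⟦X⟧ - S` has neighbourhood `S`. For a component
`D`, the other components yield disjoint connected pairwise adjacent branch sets for the
vertices of `S`: `a + D'`, `b + D''` and `c` if there are three components, and a `K₃`-minor
rooted at `S` in the other component `D'`, which has at least two vertices, if there are only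
two. Contracting them turns the model of `G⟦X⟧` into one of `G⟦D ∪ S⟧`, in which `S` is a
clique. By induction each `G⟦D ∪ S⟧` has a decomposition, and these are glued along bags
containing `S`. Throughout, torsos compose: the torso of `B ⊆ X` in `G⟦X⟧` is `G⟦B⟧`.
-/

open Set

section ReachableIn

variable {V : Type*} {G : SimpleGraph V} {A B : Set V} {u v w : V}

def ReachableIn (G : SimpleGraph V) (A : Set V) (u v : V) : Prop :=
  ∃ p : G.Walk u v, ∀ x ∈ p.support, x ∈ A

lemma ReachableIn.refl (hu : u ∈ A) : ReachableIn G A u u :=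
  ⟨.nil, by simpa using hu⟩

lemma ReachableIn.symm (h : ReachableIn G A u v) : ReachableIn G A v u := by
  obtain ⟨p, hp⟩ := h
  exact ⟨p.reverse, by simpa using hp⟩

lemma ReachableIn.trans (h : ReachableIn G A u v) (h' : ReachableIn G A v w) :
    ReachableIn G A u w := by
  obtain ⟨p, hp⟩ := h
  obtain ⟨q, hq⟩ := h'
  exact ⟨p.append q, fun x hx => (p.mem_support_append_iff q).1 hx |>.elim (hp x) (hq x)⟩

lemma ReachableIn.mono (hAB : A ⊆ B) (h : ReachableIn G A u v) : ReachableIn G B u v := by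
  obtain ⟨p, hp⟩ := h
  exact ⟨p, fun x hx => hAB (hp x hx)⟩

lemma ReachableIn.cons (hadj : G.Adj u v) (hu : u ∈ A) (h : ReachableIn G A v w) :
    ReachableIn G A u w := by
  obtain ⟨p, hp⟩ := h
  exact ⟨.cons hadj p, by simpa [hu] using hp⟩

lemma reachableIn_of_adj (hadj : G.Adj u v) (hu : u ∈ A) (hv : v ∈ A) : ReachableIn G A u v :=
  (ReachableIn.refl hv).cons hadj hu

lemma connected_induce_iff_reachableIn :
    (G.induce A).Connected ↔ A.Nonempty ∧ ∀ u ∈ A, ∀ v ∈ A, ReachableIn G A u v := by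
  constructor
  · intro h
    refine ⟨Set.nonempty_coe_sort.1 h.nonempty, fun u hu v hv => ?_⟩
    obtain ⟨p⟩ := h.preconnected ⟨u, hu⟩ ⟨v, hv⟩
    refine ⟨p.map (SimpleGraph.Embedding.induce A).toHom, fun x hx => ?_⟩
    obtain ⟨y, -, rfl⟩ := List.mem_map.1 ((p.support_map _) ▸ hx)
    exact y.2
  · rintro ⟨⟨a, ha⟩, h⟩
    refine SimpleGraph.connected_iff_exists_forall_reachable _ |>.2 ⟨⟨a, ha⟩, ?_⟩
    rintro ⟨v, hv⟩
    obtain ⟨p, hp⟩ := h a ha v hv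
    exact ⟨p.induce A hp⟩

lemma SimpleGraph.Connected.reachableIn (h : (G.induce A).Connected) (hu : u ∈ A)
    (hv : v ∈ A) : ReachableIn G A u v :=
  (connected_induce_iff_reachableIn.1 h).2 u hu v hv

lemma connected_induce_singleton (v : V) : (G.induce {v}).Connected :=
  connected_induce_iff_reachableIn.2 ⟨⟨v, rfl⟩, by rintro _ rfl _ rfl; exact .refl rfl⟩

lemma SimpleGraph.Connected.induce_insert (h : (G.induce A).Connected) (hv : v ∈ A)
    (hadj : G.Adj u v) : (G.induce (insert u A)).Connected := by
  simpa using SimpleGraph.connected_induce_union (connected_induce_singleton u).preconnected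
    h.preconnected rfl hv hadj

def Touches (G : SimpleGraph V) (A B : Set V) : Prop :=
  ∃ a ∈ A, ∃ b ∈ B, G.Adj a b

lemma Touches.symm (h : Touches G A B) : Touches G B A := by
  obtain ⟨a, ha, b, hb, hab⟩ := h
  exact ⟨b, hb, a, ha, hab.symm⟩

lemma Touches.mono {A' B' : Set V} (h : Touches G A B) (hA : A ⊆ A') (hB : B ⊆ B') :
    Touches G A' B' := by
  obtain ⟨a, ha, b, hb, hab⟩ := h
  exact ⟨a, hA ha, b, hB hb, hab⟩

lemma touches_singleton_of_mem_nbhd (h : u ∈ Nbhd G A) : Touches G {u} A := by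
  obtain ⟨-, a, ha, hau⟩ := h
  exact ⟨u, rfl, a, ha, hau.symm⟩

lemma touches_singleton_right_of_mem_nbhd (h : u ∈ Nbhd G A) : Touches G A {u} :=
  (touches_singleton_of_mem_nbhd h).symm

lemma touches_insert_of_mem_nbhd (h : u ∈ Nbhd G A) (hu : u ∈ B) : Touches G (insert v A) B :=
  (touches_singleton_right_of_mem_nbhd h).mono (subset_insert _ _) (singleton_subset_iff.2 hu)

lemma connected_induce_biUnion {H : SimpleGraph V} {M : V → Set V}
    (hA : (H.induce A).Connected) (hM : ∀ a ∈ A, (G.induce (M a)).Connected)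
    (hMe : ∀ a ∈ A, ∀ b ∈ A, H.Adj a b → Touches G (M a) (M b)) :
    (G.induce (⋃ a ∈ A, M a)).Connected := by
  have walk : ∀ {a b : V} (p : H.Walk a b), (∀ x ∈ p.support, x ∈ A) →
      ∀ u ∈ M a, ∀ v ∈ M b, ReachableIn G (⋃ a ∈ A, M a) u v := by
    intro a b p
    induction p with
    | nil =>
      intro hp u hu v hv
      have ha := hp _ (List.mem_singleton_self _)
      exact ((hM _ ha).reachableIn hu hv).mono (subset_biUnion_of_mem ha)
    | @cons a c b hadj p ih =>
      intro hp u hu v hv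
      have ha : a ∈ A := hp a (by simp)
      have hc : c ∈ A := hp c (by simp)
      obtain ⟨x, hx, y, hy, hxy⟩ := hMe a ha c hc hadj
      exact (((hM a ha).reachableIn hu hx).mono (subset_biUnion_of_mem ha)).trans
        ((reachableIn_of_adj hxy (mem_biUnion ha hx) (mem_biUnion hc hy)).trans
          (ih (fun t ht => hp t (by simp [ht])) y hy v hv))
  obtain ⟨a₀, ha₀⟩ := (connected_induce_iff_reachableIn.1 hA).1
  obtain ⟨x₀, hx₀⟩ := (connected_induce_iff_reachableIn.1 (hM a₀ ha₀)).1
  refine connected_induce_iff_reachableIn.2 ⟨⟨x₀, mem_biUnion ha₀ hx₀⟩, fun u hu v hv => ?_⟩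
  obtain ⟨a, ha, hua⟩ := mem_iUnion₂.1 hu
  obtain ⟨b, hb, hvb⟩ := mem_iUnion₂.1 hv
  obtain ⟨p, hp⟩ := hA.reachableIn ha hb
  exact walk p hp u hua v hvb

end ReachableIn

section Components

variable {V : Type*} {G : SimpleGraph V} {X C D : Set V} {u v w : V}

def compOutside (G : SimpleGraph V) (X : Set V) (v : V) : Set V :=
  {u | u ∉ X ∧ ReachableIn G Xᶜ u v}

lemma mem_compOutside_self (hv : v ∉ X) : v ∈ compOutside G X v :=
  ⟨hv, .refl hv⟩

lemma compOutside_subset_compl : compOutside G X v ⊆ Xᶜ := fun _ hu => hu.1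

lemma mem_compOutside_of_adj (hu : u ∈ compOutside G X v) (hw : w ∉ X) (hadj : G.Adj u w) :
    w ∈ compOutside G X v :=
  ⟨hw, hu.2.cons hadj.symm hw⟩

lemma compOutside_eq_of_mem (hu : u ∈ compOutside G X v) :
    compOutside G X u = compOutside G X v := by
  ext z
  exact ⟨fun hz => ⟨hz.1, hz.2.trans hu.2⟩, fun hz => ⟨hz.1, hz.2.trans hu.2.symm⟩⟩

lemma compOutside_eq_of_adj (hu : u ∉ X) (hv : v ∉ X) (hadj : G.Adj u v) :
    compOutside G X u = compOutside G X v :=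
  (compOutside_eq_of_mem (mem_compOutside_of_adj (mem_compOutside_self hu) hv hadj)).symm

lemma connected_induce_compOutside (hv : v ∉ X) :
    (G.induce (compOutside G X v)).Connected := by
  refine connected_induce_iff_reachableIn.2 ⟨⟨v, mem_compOutside_self hv⟩, ?_⟩
  have toBase : ∀ z ∈ compOutside G X v, ReachableIn G (compOutside G X v) z v := by
    rintro z ⟨-, p, hp⟩
    refine ⟨p, fun t ht => ⟨hp t ht, ?_⟩⟩
    exact ((p.connected_induce_support).reachableIn ht p.end_mem_support).mono hp
  exact fun u hu u' hu' => (toBase u hu).trans (toBase u' hu').symm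

lemma isCompOutside_compOutside (hv : v ∉ X) : IsCompOutside G X (compOutside G X v) :=
  ⟨compOutside_subset_compl, connected_induce_compOutside hv,
    fun _ hu _ hw hadj => mem_compOutside_of_adj hu hw hadj⟩

lemma IsCompOutside.nonempty (h : IsCompOutside G X C) : C.Nonempty :=
  (connected_induce_iff_reachableIn.1 h.2.1).1

lemma IsCompOutside.mem_of_reachableIn (h : IsCompOutside G X C) (hr : ReachableIn G Xᶜ u v)
    (hu : u ∈ C) : v ∈ C := by
  obtain ⟨p, hp⟩ := hr
  induction p with
  | nil => exact hu
  | cons hadj p ih =>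
    exact ih (h.2.2 _ hu _ (hp _ (by simp)) hadj) (fun t ht => hp t (by simp [ht]))

lemma IsCompOutside.eq_compOutside (h : IsCompOutside G X C) (hv : v ∈ C) :
    C = compOutside G X v := by
  ext u
  refine ⟨fun hu => ⟨h.1 hu, (h.2.1.reachableIn hu hv).mono h.1⟩, fun hu => ?_⟩
  exact h.mem_of_reachableIn hu.2.symm hv

lemma IsCompOutside.nbhd_subset (h : IsCompOutside G X C) : Nbhd G C ⊆ X := by
  rintro v ⟨hvC, u, hu, hadj⟩
  by_contra hvX
  exact hvC (h.2.2 u hu v hvX hadj)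

lemma IsCompOutside.subset_of_connected (hD : IsCompOutside G X D)
    (hC : (G.induce C).Connected) (hCX : C ⊆ Xᶜ) (hCD : (C ∩ D).Nonempty) : C ⊆ D := by
  obtain ⟨x, hxC, hxD⟩ := hCD
  exact fun z hz => hD.mem_of_reachableIn ((hC.reachableIn hxC hz).mono hCX) hxD

lemma IsCompOutside.mem_or_mem_of_adj (h : IsCompOutside G X C) (hu : u ∈ C) (huv : G.Adj u v) :
    v ∈ C ∪ X := by
  by_cases hv : v ∈ X
  · exact Or.inr hv
  · exact Or.inl (h.2.2 u hu v hv huv)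

lemma IsCompOutside.disjoint_of_ne (hC : IsCompOutside G X C) (hD : IsCompOutside G X D)
    (hne : C ≠ D) : Disjoint C D :=
  disjoint_left.2 fun _ hC' hD' => hne ((hC.eq_compOutside hC').trans (hD.eq_compOutside hD').symm)

lemma compOutside_compl_subset {Y : Set V} : compOutside G Yᶜ v ⊆ Y :=
  fun _ hu => not_not.1 hu.1

lemma nbhd_compOutside_compl_subset {Y Z : Set V} (hYZ : Y ⊆ Z) :
    Nbhd G (compOutside G Yᶜ v) ⊆ (Z \ Y) ∪ Nbhd G Z := by
  rintro w ⟨hwE, u, hu, huw⟩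
  have huY : u ∈ Y := compOutside_compl_subset hu
  by_cases hwY : w ∈ Y
  · exact absurd (mem_compOutside_of_adj hu (not_not.2 hwY) huw) hwE
  by_cases hwZ : w ∈ Z
  · exact Or.inl ⟨hwZ, hwY⟩
  · exact Or.inr ⟨hwZ, u, hYZ huY, huw⟩

end Components

section SpanningTorso

variable {V : Type*} {G : SimpleGraph V} {X B C : Set V} {u v x t : V}

/-- The torso `G⟦X⟧` as a graph on all of `V`, with the vertices outside `X` isolated, so that
torsos of torsos live on the same vertex type. -/
def spanningTorso (G : SimpleGraph V) (X : Set V) : SimpleGraph V where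
  Adj u v := u ≠ v ∧ u ∈ X ∧ v ∈ X ∧
    (G.Adj u v ∨ ∃ C, IsCompOutside G X C ∧ u ∈ Nbhd G C ∧ v ∈ Nbhd G C)
  symm := ⟨fun _ _ ⟨hne, hu, hv, h⟩ =>
    ⟨hne.symm, hv, hu, h.imp (fun h => h.symm) fun ⟨C, hC, hu, hv⟩ => ⟨C, hC, hv, hu⟩⟩⟩
  loopless := ⟨fun _ h => h.1 rfl⟩

lemma spanningTorso_adj_of_adj (h : G.Adj u v) (hu : u ∈ X) (hv : v ∈ X) :
    (spanningTorso G X).Adj u v :=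
  ⟨h.ne, hu, hv, Or.inl h⟩

lemma spanningTorso_adj_of_mem_nbhd (hne : u ≠ v) (hu : u ∈ X) (hv : v ∈ X)
    (hC : IsCompOutside G X C) (huC : u ∈ Nbhd G C) (hvC : v ∈ Nbhd G C) :
    (spanningTorso G X).Adj u v :=
  ⟨hne, hu, hv, Or.inr ⟨C, hC, huC, hvC⟩⟩

lemma mem_of_spanningTorso_adj (h : (spanningTorso G X).Adj u v) : u ∈ X := h.2.1

lemma torso_adj_iff {u v : X} : (torso G X).Adj u v ↔ (spanningTorso G X).Adj u v :=
  ⟨fun ⟨hne, h⟩ => ⟨Subtype.val_injective.ne hne, u.2, v.2, h⟩,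
    fun ⟨hne, _, _, h⟩ => ⟨fun e => hne (congrArg Subtype.val e), h⟩⟩

lemma spanningTorso_univ : spanningTorso G univ = G := by
  ext u v
  refine ⟨fun ⟨_, _, _, h⟩ => h.resolve_right ?_,
    fun h => spanningTorso_adj_of_adj h trivial trivial⟩
  rintro ⟨C, hC, -⟩
  obtain ⟨c, hc⟩ := hC.nonempty
  exact hC.1 hc trivial

lemma mem_nbhd_compOutside_of_adj (hu : u ∈ X) (hv : v ∉ X) (hadj : G.Adj u v) :
    u ∈ Nbhd G (compOutside G X v) :=
  ⟨fun h => h.1 hu, v, mem_compOutside_self hv, hadj.symm⟩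

lemma exists_mem_support_mem_nbhd {a : V} (p : G.Walk a v) (ha : a ∉ X) (hv : v ∈ X) :
    ∃ b ∈ p.support, b ∈ X ∧ b ∈ Nbhd G (compOutside G X a) := by
  induction p with
  | nil => exact absurd hv ha
  | @cons a c v hadj p ih =>
    by_cases hc : c ∈ X
    · exact ⟨c, by simp, hc, mem_nbhd_compOutside_of_adj hc ha hadj.symm⟩
    · obtain ⟨b, hb, hbX, hbN⟩ := ih hc hv
      rw [← compOutside_eq_of_adj ha hc hadj] at hbN
      exact ⟨b, by simp [hb], hbX, hbN⟩

lemma reachableIn_spanningTorso_of_walk {D : Set V} {a : V} (p : G.Walk a v)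
    (hp : ∀ x ∈ p.support, x ∈ D) (hv : v ∈ X) (hu : u ∈ D ∩ X)
    (hstart : u = a ∨ a ∉ X ∧ u ∈ Nbhd G (compOutside G X a)) :
    ReachableIn (spanningTorso G X) (D ∩ X) u v := by
  induction p generalizing u with
  | nil =>
    rcases hstart with rfl | ⟨ha, -⟩
    · exact .refl hu
    · exact absurd hv ha
  | @cons a c v hadj p ih =>
    have hcD : c ∈ D := hp c (by simp)
    have hp' : ∀ x ∈ p.support, x ∈ D := fun x hx => hp x (by simp [hx])
    by_cases hc : c ∈ X
    · refine ReachableIn.trans ?_ (ih hp' hv ⟨hcD, hc⟩ (Or.inl rfl))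
      rcases hstart with rfl | ⟨ha, huN⟩
      · exact reachableIn_of_adj (spanningTorso_adj_of_adj hadj hu.2 hc) hu ⟨hcD, hc⟩
      · obtain rfl | hne := eq_or_ne u c
        · exact .refl hu
        · exact reachableIn_of_adj (spanningTorso_adj_of_mem_nbhd hne hu.2 hc
            (isCompOutside_compOutside ha) huN (mem_nbhd_compOutside_of_adj hc ha hadj.symm))
            hu ⟨hcD, hc⟩
    · refine ih hp' hv hu (Or.inr ⟨hc, ?_⟩)
      rcases hstart with rfl | ⟨ha, huN⟩
      · exact mem_nbhd_compOutside_of_adj hu.2 hc hadj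
      · rwa [← compOutside_eq_of_adj ha hc hadj]

lemma reachableIn_of_spanningTorso_adj (hBX : B ⊆ X) (h : (spanningTorso G X).Adj u v)
    (hu : u ∉ B) (hv : v ∉ B) : ReachableIn G Bᶜ u v := by
  obtain ⟨-, -, -, h | ⟨C, hC, ⟨-, cu, hcu, hu'⟩, ⟨-, cv, hcv, hv'⟩⟩⟩ := h
  · exact reachableIn_of_adj h hu hv
  · have hCB : C ⊆ Bᶜ := fun c hc hcB => hC.1 hc (hBX hcB)
    exact (reachableIn_of_adj hu'.symm hu (hCB hcu)).trans
      (((hC.2.1.reachableIn hcu hcv).mono hCB).trans (reachableIn_of_adj hv' (hCB hcv) hv))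

lemma ReachableIn.of_spanningTorso (hBX : B ⊆ X)
    (h : ReachableIn (spanningTorso G X) Bᶜ u v) : ReachableIn G Bᶜ u v := by
  obtain ⟨p, hp⟩ := h
  induction p with
  | nil => exact .refl (hp _ (by simp))
  | cons hadj p ih =>
    exact (reachableIn_of_spanningTorso_adj hBX hadj (hp _ (by simp)) (hp _ (by simp))).trans
      (ih fun x hx => hp x (by simp [hx]))

lemma ReachableIn.mem_of_spanningTorso (h : ReachableIn (spanningTorso G X) B u v)
    (hv : v ∈ X) : u ∈ X := by
  obtain ⟨p, -⟩ := h
  cases p with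
  | nil => exact hv
  | cons hadj _ => exact mem_of_spanningTorso_adj hadj

lemma compOutside_spanningTorso (hBX : B ⊆ X) (hx : x ∈ X) :
    compOutside (spanningTorso G X) B x = compOutside G B x ∩ X := by
  ext u
  refine ⟨fun ⟨hu, h⟩ => ⟨⟨hu, h.of_spanningTorso hBX⟩, h.mem_of_spanningTorso hx⟩,
    fun ⟨⟨hu, p, hp⟩, huX⟩ => ⟨hu, ?_⟩⟩
  exact (reachableIn_spanningTorso_of_walk p hp hx ⟨hu, huX⟩ (Or.inl rfl)).mono inter_subset_left

lemma IsCompOutside.nbhd_inter_subset_nbhd {D : Set V} (hBX : B ⊆ X) (hC : IsCompOutside G X C)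
    (hD : IsCompOutside G B D) (hCD : (C ∩ D).Nonempty) : Nbhd G C ∩ B ⊆ Nbhd G D := by
  have hCsub : C ⊆ D :=
    hD.subset_of_connected hC.2.1 (fun c hc hcB => hC.1 hc (hBX hcB)) hCD
  rintro u ⟨⟨-, c, hc, hcu⟩, huB⟩
  exact ⟨fun huD => hD.1 huD huB, c, hCsub hc, hcu⟩

lemma mem_nbhd_of_spanningTorso_adj {D : Set V} (hBX : B ⊆ X) (hD : IsCompOutside G B D)
    (hu : u ∈ B) (ht : t ∈ D) (hadj : (spanningTorso G X).Adj t u) : u ∈ Nbhd G D := by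
  obtain ⟨-, -, -, h | ⟨C, hC, ⟨-, c, hc, hct⟩, huC⟩⟩ := hadj
  · exact ⟨fun huD => hD.1 huD hu, t, ht, h⟩
  · have hcB : c ∉ B := fun hcB => hC.1 hc (hBX hcB)
    exact hC.nbhd_inter_subset_nbhd hBX hD ⟨c, hc, hD.2.2 t ht c hcB hct.symm⟩ ⟨huC, hu⟩

lemma mem_nbhd_spanningTorso {D : Set V} (hBX : B ⊆ X) (hD : IsCompOutside G B D)
    (hDX : (D ∩ X).Nonempty) (hu : u ∈ B) (huD : u ∈ Nbhd G D) :
    u ∈ Nbhd (spanningTorso G X) (D ∩ X) := by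
  obtain ⟨-, d, hdD, hdu⟩ := huD
  refine ⟨fun h => hD.1 h.1 hu, ?_⟩
  by_cases hdX : d ∈ X
  · exact ⟨d, ⟨hdD, hdX⟩, spanningTorso_adj_of_adj hdu hdX (hBX hu)⟩
  obtain ⟨x, hxD, hxX⟩ := hDX
  obtain ⟨p, hp⟩ := hD.2.1.reachableIn hdD hxD
  obtain ⟨b, hb, hbX, hbN⟩ := exists_mem_support_mem_nbhd p hdX hxX
  have hbD : b ∈ D := hp b hb
  exact ⟨b, ⟨hbD, hbX⟩, spanningTorso_adj_of_mem_nbhd (fun h => hD.1 hbD (h ▸ hu)) hbX (hBX hu)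
    (isCompOutside_compOutside hdX) hbN (mem_nbhd_compOutside_of_adj (hBX hu) hdX hdu.symm)⟩

lemma spanningTorso_spanningTorso_le (hBX : B ⊆ X) :
    spanningTorso (spanningTorso G X) B ≤ spanningTorso G B := by
  rintro u v ⟨hne, huB, hvB, ⟨-, -, -, h | ⟨C, hC, huC, hvC⟩⟩ | ⟨E, hE, huE, hvE⟩⟩
  · exact spanningTorso_adj_of_adj h huB hvB
  · obtain ⟨c, hc⟩ := hC.nonempty
    have hcB : c ∉ B := fun h => hC.1 hc (hBX h)
    have hD := isCompOutside_compOutside (G := G) hcB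
    have hCD : (C ∩ compOutside G B c).Nonempty := ⟨c, hc, mem_compOutside_self hcB⟩
    exact spanningTorso_adj_of_mem_nbhd hne huB hvB hD
      (hC.nbhd_inter_subset_nbhd hBX hD hCD ⟨huC, huB⟩)
      (hC.nbhd_inter_subset_nbhd hBX hD hCD ⟨hvC, hvB⟩)
  · obtain ⟨-, t, htE, htu⟩ := id huE
    have htB : t ∉ B := hE.1 htE
    have hD := isCompOutside_compOutside (G := G) htB
    rw [hE.eq_compOutside htE, compOutside_spanningTorso hBX (mem_of_spanningTorso_adj htu)]
      at huE hvE
    obtain ⟨-, tu, htu, htuu⟩ := huE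
    obtain ⟨-, tv, htv, htvv⟩ := hvE
    exact spanningTorso_adj_of_mem_nbhd hne huB hvB hD
      (mem_nbhd_of_spanningTorso_adj hBX hD huB htu.1 htuu)
      (mem_nbhd_of_spanningTorso_adj hBX hD hvB htv.1 htvv)

lemma le_spanningTorso_spanningTorso (hBX : B ⊆ X) :
    spanningTorso G B ≤ spanningTorso (spanningTorso G X) B := by
  rintro u v ⟨hne, huB, hvB, h | ⟨D, hD, huD, hvD⟩⟩
  · exact spanningTorso_adj_of_adj (spanningTorso_adj_of_adj h (hBX huB) (hBX hvB)) huB hvB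
  by_cases hDX : (D ∩ X).Nonempty
  · obtain ⟨x, hxD, hxX⟩ := id hDX
    have hE : IsCompOutside (spanningTorso G X) B (D ∩ X) := by
      rw [hD.eq_compOutside hxD, ← compOutside_spanningTorso hBX hxX]
      exact isCompOutside_compOutside (hD.1 hxD)
    exact spanningTorso_adj_of_mem_nbhd hne huB hvB hE
      (mem_nbhd_spanningTorso hBX hD hDX huB huD) (mem_nbhd_spanningTorso hBX hD hDX hvB hvD)
  · have hDX' : IsCompOutside G X D :=
      ⟨fun z hz hzX => hDX ⟨z, hz, hzX⟩, hD.2.1,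
        fun z hz w hw hzw => hD.2.2 z hz w (fun h => hw (hBX h)) hzw⟩
    exact spanningTorso_adj_of_adj
      (spanningTorso_adj_of_mem_nbhd hne (hBX huB) (hBX hvB) hDX' huD hvD) huB hvB

theorem spanningTorso_spanningTorso (hBX : B ⊆ X) :
    spanningTorso (spanningTorso G X) B = spanningTorso G B :=
  le_antisymm (spanningTorso_spanningTorso_le hBX) (le_spanningTorso_spanningTorso hBX)

lemma spanningTorso_adj_of_subset (hBX : B ⊆ X) (h : (spanningTorso G X).Adj u v) (hu : u ∈ B)
    (hv : v ∈ B) : (spanningTorso G B).Adj u v :=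
  spanningTorso_spanningTorso (G := G) hBX ▸ spanningTorso_adj_of_adj h hu hv

end SpanningTorso

section TorsoSeparations

variable {V : Type*} {G : SimpleGraph V} {X Y S Z E : Set V} {k : ℕ}

/-- A separation of the torso of `X`, with its sides taken as subsets of `V`. -/
def IsTorsoSep (G : SimpleGraph V) (X Y S Z : Set V) : Prop :=
  Y ∪ S ∪ Z = X ∧ Disjoint Y S ∧ Disjoint Y Z ∧ Disjoint S Z ∧
    ∀ y ∈ Y, ∀ z ∈ Z, ¬ (spanningTorso G X).Adj y z

def SepOrderGE (G : SimpleGraph V) (X : Set V) (k : ℕ) : Prop :=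
  ∀ Y S Z, IsTorsoSep G X Y S Z → Y.Nonempty → Z.Nonempty → k ≤ S.ncard

lemma IsTorsoSep.left_subset (h : IsTorsoSep G X Y S Z) : Y ⊆ X :=
  h.1 ▸ subset_union_left.trans subset_union_left

lemma IsTorsoSep.right_subset (h : IsTorsoSep G X Y S Z) : Z ⊆ X :=
  h.1 ▸ subset_union_right

lemma IsTorsoSep.symm (h : IsTorsoSep G X Y S Z) : IsTorsoSep G X Z S Y := by
  obtain ⟨h₁, h₂, h₃, h₄, h₅⟩ := h
  refine ⟨?_, h₄.symm, h₃.symm, h₂.symm, fun z hz y hy hzy => h₅ y hy z hz hzy.symm⟩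
  rw [← h₁]
  ext
  simp only [mem_union]
  tauto

lemma isTorsoSep_image {Y' S' Z' : Set X} (h : IsSeparation (torso G X) Y' S' Z') :
    IsTorsoSep G X (Subtype.val '' Y') (Subtype.val '' S') (Subtype.val '' Z') := by
  obtain ⟨h₁, h₂, h₃, h₄, h₅⟩ := h
  refine ⟨?_, (disjoint_image_iff Subtype.val_injective).2 h₁,
    (disjoint_image_iff Subtype.val_injective).2 h₂,
    (disjoint_image_iff Subtype.val_injective).2 h₃, ?_⟩
  · rw [← image_union, ← image_union, h₄, image_univ, Subtype.range_coe]
  · rintro _ ⟨y, hy, rfl⟩ _ ⟨z, hz, rfl⟩ hyz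
    exact h₅ y hy z hz (torso_adj_iff.2 hyz)

lemma ncard_image_val {A : Set X} : (Subtype.val '' A).ncard = A.ncard :=
  ncard_image_of_injective _ Subtype.val_injective

lemma kConnected_torso (hX : 3 < X.ncard) (h : SepOrderGE G X 3) :
    KConnected 3 (torso G X) := by
  refine ⟨by rwa [Nat.card_coe_set_eq], fun Y S Z hsep hY hZ => ?_⟩
  simpa [ncard_image_val] using h _ _ _ (isTorsoSep_image hsep) (hY.image _) (hZ.image _)

lemma exists_isTorsoSep_of_not_quasi4Connected (hnq : ¬ Quasi4Connected (torso G X))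
    (hX : 3 < X.ncard) (h : SepOrderGE G X 3) :
    ∃ Y S Z, IsTorsoSep G X Y S Z ∧ S.ncard = 3 ∧ 2 ≤ Y.ncard ∧ 2 ≤ Z.ncard := by
  simp only [Quasi4Connected, kConnected_torso hX h, true_and, not_forall] at hnq
  obtain ⟨Y, S, Z, hsep, hS, hYZ⟩ := hnq
  exact ⟨_, _, _, isTorsoSep_image hsep, by rwa [ncard_image_val],
    by rw [ncard_image_val]; omega, by rw [ncard_image_val]; omega⟩

lemma quasi4Connected_torso_of_four_le (hX : 3 < X.ncard) (h : SepOrderGE G X 4) :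
    Quasi4Connected (torso G X) := by
  refine ⟨kConnected_torso hX fun Y S Z hs hY hZ => (h Y S Z hs hY hZ).trans' (by omega),
    fun Y S Z hsep hS => ?_⟩
  by_contra! hYZ
  have := h _ _ _ (isTorsoSep_image hsep) ((nonempty_of_ncard_ne_zero (by omega)).image _)
    ((nonempty_of_ncard_ne_zero (by omega)).image _)
  rw [ncard_image_val] at this
  omega

lemma torso_eq_top_iff : torso G X = ⊤ ↔ (spanningTorso G X).IsClique X := by
  refine ⟨fun h u hu v hv hne => ?_, fun h => ?_⟩
  · have : (torso G X).Adj ⟨u, hu⟩ ⟨v, hv⟩ := by rw [h]; exact Subtype.coe_ne_coe.1 hne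
    exact torso_adj_iff.1 this
  · ext u v
    exact ⟨fun huv => huv.ne, fun hne =>
      torso_adj_iff.2 (h u.2 v.2 (Subtype.val_injective.ne hne))⟩

lemma quasi4Connected_of_torso_eq_top (htop : torso G X = ⊤) (hX : 4 ≤ X.ncard) :
    Quasi4Connected (torso G X) := by
  have hno : ∀ Y S Z : Set X, IsSeparation (torso G X) Y S Z → Y.Nonempty → Z.Nonempty →
      False := by
    rintro Y S Z ⟨-, hYZ, -, -, h⟩ ⟨y, hy⟩ ⟨z, hz⟩
    exact h y hy z hz (htop ▸ fun e => hYZ.ne_of_mem hy hz e)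
  refine ⟨⟨by rw [Nat.card_coe_set_eq]; omega, fun Y S Z h hY hZ => (hno Y S Z h hY hZ).elim⟩,
    fun Y S Z h _ => ?_⟩
  rcases Y.eq_empty_or_nonempty with rfl | hY
  · simp
  rcases Z.eq_empty_or_nonempty with rfl | hZ
  · simp
  exact (hno Y S Z h hY hZ).elim

lemma IsTorsoSep.nbhd (hEX : E ⊆ X) :
    IsTorsoSep G X E (Nbhd (spanningTorso G X) E) (X \ (E ∪ Nbhd (spanningTorso G X) E)) := by
  have hN : Nbhd (spanningTorso G X) E ⊆ X := fun _ ⟨_, _, _, h⟩ => mem_of_spanningTorso_adj h.symm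
  refine ⟨?_, disjoint_left.2 fun t ht htN => htN.1 ht,
    disjoint_left.2 fun t ht htZ => htZ.2 (Or.inl ht),
    disjoint_left.2 fun t ht htZ => htZ.2 (Or.inr ht),
    fun y hy z hz hyz => hz.2 (Or.inr ⟨fun h => hz.2 (Or.inl h), y, hy, hyz⟩)⟩
  rw [union_sdiff_self]
  exact union_eq_self_of_subset_left (union_subset hEX hN)

lemma SepOrderGE.le_ncard_nbhd {t : V} (hk : SepOrderGE G X k) (hEX : E ⊆ X) (hE : E.Nonempty)
    (ht : t ∈ X) (htE : t ∉ E) (htN : t ∉ Nbhd (spanningTorso G X) E) :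
    k ≤ (Nbhd (spanningTorso G X) E).ncard :=
  hk _ _ _ (IsTorsoSep.nbhd hEX) hE ⟨t, ht, fun h => h.elim htE htN⟩

lemma isTorsoSep_of_not_adj {u v : V} (hu : u ∈ X) (hv : v ∈ X) (hne : u ≠ v)
    (hnadj : ¬ (spanningTorso G X).Adj u v) : IsTorsoSep G X {u} (X \ {u, v}) {v} := by
  refine ⟨?_, by simp, by simpa using hne, by simp, by simpa using hnadj⟩
  ext t
  by_cases htu : t = u <;> by_cases htv : t = v <;> simp_all

lemma IsTorsoSep.ncard_add_two_le [Finite V] (h : IsTorsoSep G X Y S Z) (hY : Y.Nonempty)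
    (hZ : Z.Nonempty) : S.ncard + 2 ≤ X.ncard := by
  obtain ⟨hX, hYS, hYZ, hSZ, -⟩ := h
  obtain ⟨y, hy⟩ := hY
  obtain ⟨z, hz⟩ := hZ
  have hzS : z ∉ S := disjoint_right.1 hSZ hz
  have hyzS : y ∉ insert z S := by
    rintro (rfl | hyS)
    exacts [disjoint_left.1 hYZ hy hz, disjoint_left.1 hYS hy hyS]
  calc S.ncard + 2 = (insert y (insert z S)).ncard := by
        rw [ncard_insert_of_notMem hyzS, ncard_insert_of_notMem hzS]
    _ ≤ X.ncard := ncard_le_ncard (by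
        rw [← hX]
        exact insert_subset (Or.inl (Or.inl hy)) (insert_subset (Or.inr hz)
          fun t ht => Or.inl (Or.inr ht)))

lemma exists_minimal_isTorsoSep [Finite V] (hq : ¬ Quasi4Connected (torso G X))
    (hc : ¬ (torso G X = ⊤ ∧ X.ncard ≤ 4)) :
    ∃ Y S Z, IsTorsoSep G X Y S Z ∧ Y.Nonempty ∧ Z.Nonempty ∧ S.ncard ≤ 3 ∧
      SepOrderGE G X S.ncard ∧ (S.ncard = 3 → 2 ≤ Y.ncard ∧ 2 ≤ Z.ncard) := by
  classical
  have hex : ∃ n, ∃ Y S Z, IsTorsoSep G X Y S Z ∧ Y.Nonempty ∧ Z.Nonempty ∧ S.ncard = n := by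
    by_contra hno
    have htop : torso G X = ⊤ := torso_eq_top_iff.2 fun u hu v hv hne => by_contra fun h =>
      hno ⟨_, _, _, _, isTorsoSep_of_not_adj hu hv hne h, singleton_nonempty u,
        singleton_nonempty v, rfl⟩
    exact hq (quasi4Connected_of_torso_eq_top htop (by by_contra h; exact hc ⟨htop, by omega⟩))
  obtain ⟨Y, S, Z, hsep, hY, hZ, hS⟩ := Nat.find_spec hex
  have hmin : SepOrderGE G X S.ncard := fun Y' S' Z' h hY' hZ' =>
    hS ▸ Nat.find_min' hex ⟨Y', S', Z', h, hY', hZ', rfl⟩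
  have hX := hsep.ncard_add_two_le hY hZ
  rcases lt_trichotomy S.ncard 3 with hlt | heq | hgt
  · exact ⟨Y, S, Z, hsep, hY, hZ, hlt.le, hmin, by omega⟩
  · obtain ⟨Y', S', Z', h', hS', hY', hZ'⟩ :=
      exists_isTorsoSep_of_not_quasi4Connected hq (by omega) (heq ▸ hmin)
    exact ⟨Y', S', Z', h', nonempty_of_ncard_ne_zero (by omega),
      nonempty_of_ncard_ne_zero (by omega), hS'.le, hS' ▸ heq ▸ hmin, fun _ => ⟨hY', hZ'⟩⟩
  · exact absurd (quasi4Connected_torso_of_four_le (by omega)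
      fun Y' S' Z' h hY' hZ' => (hmin Y' S' Z' h hY' hZ').trans' hgt) hq

end TorsoSeparations

section Models

variable {V : Type*} {G K L : SimpleGraph V} {X Y C S : Set V} {M A : V → Set V}

structure IsRootedModel (G K : SimpleGraph V) (X : Set V) (M : V → Set V) : Prop where
  mem : ∀ v ∈ X, v ∈ M v
  connected : ∀ v ∈ X, (G.induce (M v)).Connected
  disjoint : X.Pairwise fun u v => Disjoint (M u) (M v)
  touches : ∀ u ∈ X, ∀ v ∈ X, K.Adj u v → Touches G (M u) (M v)

lemma IsRootedModel.comp (hM : IsRootedModel G K X M) (hA : IsRootedModel K L Y A)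
    (hAX : ∀ v ∈ Y, A v ⊆ X) : IsRootedModel G L Y fun v => ⋃ u ∈ A v, M u where
  mem v hv := mem_biUnion (hA.mem v hv) (hM.mem v (hAX v hv (hA.mem v hv)))
  connected v hv := connected_induce_biUnion (hA.connected v hv)
    (fun a ha => hM.connected a (hAX v hv ha))
    (fun a ha b hb hab => hM.touches a (hAX v hv ha) b (hAX v hv hb) hab)
  disjoint u hu v hv huv := by
    refine disjoint_left.2 fun x hxu hxv => ?_
    obtain ⟨a, ha, hxa⟩ := mem_iUnion₂.1 hxu
    obtain ⟨b, hb, hxb⟩ := mem_iUnion₂.1 hxv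
    have hab : a ≠ b := fun h => disjoint_left.1 (hA.disjoint hu hv huv) ha (h ▸ hb)
    exact disjoint_left.1 (hM.disjoint (hAX u hu ha) (hAX v hv hb) hab) hxa hxb
  touches u hu v hv huv := by
    obtain ⟨a, ha, b, hb, hab⟩ := hA.touches u hu v hv huv
    exact (hM.touches a (hAX u hu ha) b (hAX v hv hb) hab).mono
      (subset_biUnion_of_mem ha) (subset_biUnion_of_mem hb)

lemma IsRootedModel.subset_of_spanningTorso (hA : IsRootedModel (spanningTorso G X) K Y A)
    (hYX : Y ⊆ X) {v : V} (hv : v ∈ Y) : A v ⊆ X := fun _ hx =>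
  ((hA.connected v hv).reachableIn hx (hA.mem v hv)).mem_of_spanningTorso (hYX hv)

lemma IsRootedModel.isMinor_torso (hM : IsRootedModel G (spanningTorso G X) X M) :
    IsMinor (torso G X) G :=
  ⟨fun w => M w, fun w => hM.connected w w.2,
    fun w w' hne => hM.disjoint w.2 w'.2 (Subtype.val_injective.ne hne),
    fun w w' hadj => hM.touches w w.2 w' w'.2 (torso_adj_iff.1 hadj)⟩

lemma isRootedModel_singleton : IsRootedModel G (spanningTorso G univ) univ fun v => {v} where
  mem _ _ := rfl
  connected v _ := connected_induce_singleton v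
  disjoint _ _ _ _ huv := disjoint_singleton.2 huv
  touches u _ v _ huv := ⟨u, rfl, v, rfl, spanningTorso_univ (G := G) ▸ huv⟩

/-- An edge of `G⟦C ∪ S⟧` that is not an edge of `H = G⟦X⟧` comes from a component of
`H - (C ∪ S)`, and so has both ends in `S` because `C` is closed in `H` up to `S`. -/
lemma isRootedModel_spanningTorso_union [DecidablePred (· ∈ S)] (hCSX : C ∪ S ⊆ X)
    (hC : ∀ u ∈ C, ∀ v, (spanningTorso G X).Adj u v → v ∈ C ∪ S)
    (hA : IsRootedModel (spanningTorso G X) ⊤ S A) (hAC : ∀ s ∈ S, Disjoint (A s) C) :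
    IsRootedModel (spanningTorso G X) (spanningTorso G (C ∪ S)) (C ∪ S)
      fun v => if v ∈ S then A v else {v} where
  mem v _ := by split_ifs with h; exacts [hA.mem v h, rfl]
  connected v _ := by
    by_cases h : v ∈ S
    · rw [if_pos h]; exact hA.connected v h
    · rw [if_neg h]; exact connected_induce_singleton v
  disjoint u hu v hv huv := by
    have hC' : ∀ {w}, w ∈ C ∪ S → w ∉ S → w ∈ C := fun hw hwS => hw.resolve_right hwS
    beta_reduce
    split_ifs with h₁ h₂ h₂
    · exact hA.disjoint h₁ h₂ huv
    · exact disjoint_singleton_right.2 fun h => disjoint_left.1 (hAC u h₁) h (hC' hv h₂)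
    · exact disjoint_singleton_left.2 fun h => disjoint_left.1 (hAC v h₂) h (hC' hu h₁)
    · exact disjoint_singleton.2 huv
  touches u hu v hv huv := by
    rw [← spanningTorso_spanningTorso hCSX] at huv
    obtain ⟨hne, -, -, h | ⟨E, hE, ⟨-, e, he, heu⟩, ⟨-, e', he', hev⟩⟩⟩ := huv
    · refine ⟨u, ?_, v, ?_, h⟩ <;> split_ifs <;> first | exact hA.mem _ ‹_› | rfl
    have inS : ∀ {w e}, w ∈ C ∪ S → e ∈ E → (spanningTorso G X).Adj e w → w ∈ S :=
      fun hw he hew => hw.resolve_left fun hwC => hE.1 he (hC _ hwC _ hew.symm)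
    have huS := inS hu he heu
    have hvS := inS hv he' hev
    simpa [huS, hvS] using hA.touches u huS v hvS hne

end Models

section RootedK3

variable {V : Type*} {H : SimpleGraph V} {Z P B₃ : Set V} {s₁ s₂ s₃ x y : V}

lemma exists_mem_ne_ne_of_three_le_ncard {s : Set V} (h : 3 ≤ s.ncard) (a b : V) :
    ∃ w ∈ s, w ≠ a ∧ w ≠ b := by
  by_contra! hcon
  have hsub : s ⊆ {a, b} := fun w hw => by
    by_cases hwa : w = a
    · simp [hwa]
    · simp [hcon w hw hwa]
  have := (Set.ncard_le_ncard hsub).trans (Set.ncard_insert_le a {b})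
  simp only [ncard_singleton] at this
  omega

lemma SimpleGraph.Connected.induce_insert_of_touches {A : Set V} (h : (H.induce A).Connected)
    (ht : Touches H {x} A) : (H.induce (insert x A)).Connected := by
  obtain ⟨_, rfl, a, ha, hxa⟩ := ht
  exact h.induce_insert ha hxa

lemma SimpleGraph.Connected.induce_insert_of_mem_nbhd {A : Set V} (h : (H.induce A).Connected)
    (hx : x ∈ Nbhd H A) : (H.induce (insert x A)).Connected :=
  h.induce_insert_of_touches (touches_singleton_of_mem_nbhd hx)

lemma connected_induce_insert_empty (x : V) : (H.induce (insert x ∅)).Connected := by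
  rw [insert_empty_eq]
  exact connected_induce_singleton x

lemma exists_split_of_isPath {z₁ z₂ : V} (p : H.Walk z₁ z₂) (hp : p.IsPath)
    (hx : x ∈ p.support) (hy : y ∈ p.support) (hxy : x ≠ y) :
    ∃ B₁ B₂ : Set V, B₁ ⊆ {t | t ∈ p.support} ∧ B₂ ⊆ {t | t ∈ p.support} ∧
      Disjoint B₁ B₂ ∧ (H.induce B₁).Connected ∧ (H.induce B₂).Connected ∧
      Touches H B₁ B₂ ∧ z₁ ∈ B₁ ∧ z₂ ∈ B₂ ∧ (x ∈ B₁ ∧ y ∈ B₂ ∨ y ∈ B₁ ∧ x ∈ B₂) := by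
  induction p with
  | nil =>
    simp only [SimpleGraph.Walk.support_nil, List.mem_singleton] at hx hy
    exact absurd (hx.trans hy.symm) hxy
  | @cons z₁ c z₂ hadj p ih =>
    have hz₁ : z₁ ∉ p.support := ((SimpleGraph.Walk.cons_isPath_iff _ _).1 hp).2
    have hsub : {t | t ∈ p.support} ⊆ {t | t ∈ (SimpleGraph.Walk.cons hadj p).support} :=
      fun t (ht : t ∈ p.support) => by simp [ht]
    simp only [SimpleGraph.Walk.support_cons, List.mem_cons] at hx hy
    rcases hx with rfl | hx
    · exact ⟨{x}, {t | t ∈ p.support}, by simp, hsub, disjoint_singleton_left.2 hz₁,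
        connected_induce_singleton x, p.connected_induce_support,
        ⟨x, rfl, c, p.start_mem_support, hadj⟩, rfl, p.end_mem_support,
        Or.inl ⟨rfl, hy.resolve_left (Ne.symm hxy)⟩⟩
    rcases hy with rfl | hy
    · exact ⟨{y}, {t | t ∈ p.support}, by simp, hsub, disjoint_singleton_left.2 hz₁,
        connected_induce_singleton y, p.connected_induce_support,
        ⟨y, rfl, c, p.start_mem_support, hadj⟩, rfl, p.end_mem_support, Or.inr ⟨rfl, hx⟩⟩
    obtain ⟨B₁, B₂, h₁, h₂, d, c₁, c₂, t, m₁, m₂, hsep⟩ := ih hp.of_cons hx hy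
    refine ⟨insert z₁ B₁, B₂, insert_subset (by simp) (h₁.trans hsub), h₂.trans hsub,
      disjoint_insert_left.2 ⟨fun h => hz₁ (h₂ h), d⟩, c₁.induce_insert m₁ hadj,
      c₂, t.mono (subset_insert _ _) subset_rfl, mem_insert _ _, m₂, ?_⟩
    exact hsep.imp (And.imp_left (mem_insert_of_mem _)) (And.imp_left (mem_insert_of_mem _))

/-- A `K₃`-minor of `H[Z ∪ {s₁, s₂, s₃}]` with branch sets `sᵢ + Bᵢ`, `Bᵢ ⊆ Z`. -/
def IsRootedK3 (H : SimpleGraph V) (Z : Set V) (s₁ s₂ s₃ : V) : Prop :=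
  ∃ B₁ B₂ B₃ : Set V, B₁ ⊆ Z ∧ B₂ ⊆ Z ∧ B₃ ⊆ Z ∧
    Disjoint B₁ B₂ ∧ Disjoint B₁ B₃ ∧ Disjoint B₂ B₃ ∧
    (H.induce (insert s₁ B₁)).Connected ∧ (H.induce (insert s₂ B₂)).Connected ∧
    (H.induce (insert s₃ B₃)).Connected ∧
    Touches H (insert s₁ B₁) (insert s₂ B₂) ∧ Touches H (insert s₁ B₁) (insert s₃ B₃) ∧
    Touches H (insert s₂ B₂) (insert s₃ B₃)

lemma IsRootedK3.swap₁₂ (h : IsRootedK3 H Z s₁ s₂ s₃) : IsRootedK3 H Z s₂ s₁ s₃ := by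
  obtain ⟨B₁, B₂, B₃, h₁, h₂, h₃, d₁₂, d₁₃, d₂₃, c₁, c₂, c₃, t₁₂, t₁₃, t₂₃⟩ := h
  exact ⟨B₂, B₁, B₃, h₂, h₁, h₃, d₁₂.symm, d₂₃, d₁₃, c₂, c₁, c₃, t₁₂.symm, t₂₃, t₁₃⟩

lemma IsRootedK3.extend {E : Set V} {z : V} (h : IsRootedK3 H E s₁ s₂ z) (hEZ : E ⊆ Z)
    (hz : z ∈ Z) (hzE : z ∉ E) (hadj : H.Adj s₃ z) : IsRootedK3 H Z s₁ s₂ s₃ := by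
  obtain ⟨B₁, B₂, B₃, h₁, h₂, h₃, d₁₂, d₁₃, d₂₃, c₁, c₂, c₃, t₁₂, t₁₃, t₂₃⟩ := h
  refine ⟨B₁, B₂, insert z B₃, h₁.trans hEZ, h₂.trans hEZ, insert_subset hz (h₃.trans hEZ),
    d₁₂, disjoint_insert_right.2 ⟨fun h => hzE (h₁ h), d₁₃⟩,
    disjoint_insert_right.2 ⟨fun h => hzE (h₂ h), d₂₃⟩, c₁, c₂,
    c₃.induce_insert (mem_insert _ _) hadj, t₁₂, t₁₃.mono subset_rfl (subset_insert _ _),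
    t₂₃.mono subset_rfl (subset_insert _ _)⟩

lemma isRootedK3_of_singleton (hPZ : P ⊆ Z) (hB₃Z : B₃ ⊆ Z) (hPB₃ : Disjoint P B₃)
    (hP : (H.induce P).Connected) (hc₃ : (H.induce (insert s₃ B₃)).Connected)
    (h₁ : Touches H {s₁} P) (h₂ : Touches H {s₂} P) (h₁₃ : Touches H {s₁} (insert s₃ B₃))
    (h₂₃ : Touches H (insert s₂ P) (insert s₃ B₃)) : IsRootedK3 H Z s₁ s₂ s₃ :=
  ⟨∅, P, B₃, empty_subset _, hPZ, hB₃Z, empty_disjoint _, empty_disjoint _, hPB₃,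
    connected_induce_insert_empty s₁, hP.induce_insert_of_touches h₂, hc₃,
    h₁.mono (by simp) (subset_insert _ _), h₁₃.mono (by simp) subset_rfl, h₂₃⟩

lemma isRootedK3_of_path {z₁ z₂ : V} (p : H.Walk z₁ z₂) (hp : p.IsPath)
    (hpZ : ∀ t ∈ p.support, t ∈ Z) (h₁ : H.Adj s₁ z₁) (h₂ : H.Adj s₂ z₂) (hB₃Z : B₃ ⊆ Z)
    (hpB₃ : ∀ t ∈ p.support, t ∉ B₃) (hc₃ : (H.induce (insert s₃ B₃)).Connected)
    (hx : x ∈ p.support) (hy : y ∈ p.support) (hxy : x ≠ y)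
    (hx₃ : Touches H {x} (insert s₃ B₃)) (hy₃ : Touches H {y} (insert s₃ B₃)) :
    IsRootedK3 H Z s₁ s₂ s₃ := by
  obtain ⟨B₁, B₂, hB₁, hB₂, d₁₂, c₁, c₂, t₁₂, hz₁, hz₂, hsep⟩ :=
    exists_split_of_isPath p hp hx hy hxy
  have touch : ∀ {B : Set V} {s w : V}, w ∈ B → Touches H {w} (insert s₃ B₃) →
      Touches H (insert s B) (insert s₃ B₃) := fun hw h =>
    h.mono (singleton_subset_iff.2 (mem_insert_of_mem _ hw)) subset_rfl
  refine ⟨B₁, B₂, B₃, fun t ht => hpZ t (hB₁ ht), fun t ht => hpZ t (hB₂ ht), hB₃Z, d₁₂,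
    disjoint_left.2 fun t ht => hpB₃ t (hB₁ ht), disjoint_left.2 fun t ht => hpB₃ t (hB₂ ht),
    c₁.induce_insert hz₁ h₁, c₂.induce_insert hz₂ h₂, hc₃,
    t₁₂.mono (subset_insert _ _) (subset_insert _ _), ?_, ?_⟩
  · rcases hsep with ⟨hx₁, -⟩ | ⟨hy₁, -⟩
    exacts [touch hx₁ hx₃, touch hy₁ hy₃]
  · rcases hsep with ⟨-, hy₂⟩ | ⟨-, hx₂⟩
    exacts [touch hy₂ hy₃, touch hx₂ hx₃]

/-- If `s₃` has a neighbour `d` off a path joining neighbours of `s₁` and `s₂`, the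
component `D` of `Z` minus the path at `d` has at least three neighbours, among the path
and the terminals; these decide how `s₃ + D` is joined to the other two branch sets. -/
lemma isRootedK3_of_adj_off_path {z₁ z₂ d : V} (p : H.Walk z₁ z₂) (hp : p.IsPath)
    (hpZ : ∀ t ∈ p.support, t ∈ Z) (h₁ : H.Adj s₁ z₁) (h₂ : H.Adj s₂ z₂)
    (hN : Nbhd H Z = {s₁, s₂, s₃}) (hdeg : ∀ E ⊆ Z, E.Nonempty → 3 ≤ (Nbhd H E).ncard)
    (hd : d ∈ Z) (hdp : d ∉ p.support) (h₃ : H.Adj s₃ d) : IsRootedK3 H Z s₁ s₂ s₃ := by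
  set P : Set V := {t | t ∈ p.support}
  set D := compOutside H (Z \ P)ᶜ d
  have hdD : d ∈ D := mem_compOutside_self (by simp [hd, P, hdp])
  have hDZ : D ⊆ Z \ P := compOutside_compl_subset
  have hPD : Disjoint P D := disjoint_left.2 fun t htP htD => (hDZ htD).2 htP
  have hc₃ : (H.induce (insert s₃ D)).Connected :=
    (connected_induce_compOutside (by simpa using ⟨hd, hdp⟩)).induce_insert hdD h₃
  have hQ : ∀ w ∈ Nbhd H D, w ∈ P ∨ w = s₁ ∨ w = s₂ ∨ w = s₃ := fun w hw => by
    rcases nbhd_compOutside_compl_subset sdiff_subset hw with h | h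
    · exact Or.inl (by simpa [h.1] using h.2)
    · exact Or.inr (by simpa [hN] using h)
  have h3 : 3 ≤ (Nbhd H D).ncard := hdeg D (hDZ.trans sdiff_subset) ⟨d, hdD⟩
  have touch : ∀ {w}, w ∈ Nbhd H D → Touches H {w} (insert s₃ D) := fun hw =>
    (touches_singleton_of_mem_nbhd hw).mono subset_rfl (subset_insert _ _)
  have hP : (H.induce P).Connected := p.connected_induce_support
  have hPZ : P ⊆ Z := hpZ
  have ht₁ : Touches H {s₁} P := ⟨s₁, rfl, z₁, p.start_mem_support, h₁⟩
  have ht₂ : Touches H {s₂} P := ⟨s₂, rfl, z₂, p.end_mem_support, h₂⟩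
  by_cases hs₁ : s₁ ∈ Nbhd H D
  · obtain ⟨w, hw, hw₃, hw₁⟩ := exists_mem_ne_ne_of_three_le_ncard h3 s₃ s₁
    have hw₂ : w ∈ insert s₂ P := by rcases hQ w hw with h | h | h | h <;> simp_all
    exact isRootedK3_of_singleton hPZ (hDZ.trans sdiff_subset) hPD hP hc₃ ht₁ ht₂ (touch hs₁)
      ((touch hw).mono (singleton_subset_iff.2 hw₂) subset_rfl)
  by_cases hs₂ : s₂ ∈ Nbhd H D
  · obtain ⟨w, hw, hw₃, hw₂⟩ := exists_mem_ne_ne_of_three_le_ncard h3 s₃ s₂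
    have hw₁ : w ∈ insert s₁ P := by rcases hQ w hw with h | h | h | h <;> simp_all
    exact (isRootedK3_of_singleton hPZ (hDZ.trans sdiff_subset) hPD hP hc₃ ht₂ ht₁ (touch hs₂)
      ((touch hw).mono (singleton_subset_iff.2 hw₁) subset_rfl)).swap₁₂
  have inP : ∀ w ∈ Nbhd H D, w ≠ s₃ → w ∈ P := fun w hw hw₃ => by
    rcases hQ w hw with h | h | h | h <;> simp_all
  obtain ⟨x, hx, hx₃, -⟩ := exists_mem_ne_ne_of_three_le_ncard h3 s₃ s₃
  obtain ⟨y, hy, hy₃, hyx⟩ := exists_mem_ne_ne_of_three_le_ncard h3 s₃ x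
  exact isRootedK3_of_path p hp hpZ h₁ h₂ (hDZ.trans sdiff_subset)
    (fun t ht htD => (hDZ htD).2 ht) hc₃ (inP x hx hx₃) (inP y hy hy₃) (Ne.symm hyx)
    (touch hx) (touch hy)

lemma isRootedK3_of_two_adj {w₁ w₂ : V} (hZ : (H.induce Z).Connected)
    (hN : Nbhd H Z = {s₁, s₂, s₃}) (hdeg : ∀ E ⊆ Z, E.Nonempty → 3 ≤ (Nbhd H E).ncard)
    (hw₁ : w₁ ∈ Z) (hw₂ : w₂ ∈ Z) (hw : w₁ ≠ w₂) (a₁ : H.Adj s₃ w₁) (a₂ : H.Adj s₃ w₂) :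
    IsRootedK3 H Z s₁ s₂ s₃ := by
  classical
  obtain ⟨-, z₁, hz₁, h₁⟩ : s₁ ∈ Nbhd H Z := by simp [hN]
  obtain ⟨-, z₂, hz₂, h₂⟩ : s₂ ∈ Nbhd H Z := by simp [hN]
  obtain ⟨q, hq⟩ := hZ.reachableIn hz₁ hz₂
  have hpZ : ∀ t ∈ q.bypass.support, t ∈ Z := fun t ht => hq t (q.support_bypass_subset_support ht)
  by_cases hon : w₁ ∈ q.bypass.support ∧ w₂ ∈ q.bypass.support
  · exact isRootedK3_of_path q.bypass q.bypass_isPath hpZ h₁.symm h₂.symm (empty_subset _)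
      (fun _ _ => notMem_empty _) (connected_induce_insert_empty s₃) hon.1 hon.2 hw
      ⟨w₁, rfl, s₃, mem_insert _ _, a₁.symm⟩ ⟨w₂, rfl, s₃, mem_insert _ _, a₂.symm⟩
  obtain ⟨d, hd, hdp, hd₃⟩ : ∃ d ∈ Z, d ∉ q.bypass.support ∧ H.Adj s₃ d := by
    by_cases h : w₁ ∈ q.bypass.support
    · exact ⟨w₂, hw₂, fun h' => hon ⟨h, h'⟩, a₂⟩
    · exact ⟨w₁, hw₁, h, a₁⟩
  exact isRootedK3_of_adj_off_path q.bypass q.bypass_isPath hpZ h₁.symm h₂.symm hN hdeg hd hdp hd₃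

lemma isRootedK3_of_touches {E₁ E₂ : Set V} {z : V} (hE : E₁ ∪ E₂ ⊆ Z) (hz : z ∈ Z)
    (hzE : z ∉ E₁ ∪ E₂) (h₃ : H.Adj s₃ z) (d : Disjoint E₁ E₂)
    (c₁ : (H.induce (insert s₁ E₁)).Connected) (c₂ : (H.induce (insert s₂ E₂)).Connected)
    (t₁₂ : Touches H (insert s₁ E₁) (insert s₂ E₂)) (t₁₃ : Touches H (insert s₁ E₁) {z})
    (t₂₃ : Touches H (insert s₂ E₂) {z}) : IsRootedK3 H Z s₁ s₂ s₃ := by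
  refine IsRootedK3.extend (E := E₁ ∪ E₂) ?_ hE hz hzE h₃
  rw [← insert_empty_eq] at t₁₃ t₂₃
  exact ⟨E₁, E₂, ∅, subset_union_left, subset_union_right, empty_subset _, d, disjoint_empty _,
    disjoint_empty _, c₁, c₂, connected_induce_insert_empty z, t₁₂, t₁₃, t₂₃⟩

lemma ncard_triple_le (a b c : V) : ({a, b, c} : Set V).ncard ≤ 3 :=
  (ncard_insert_le _ _).trans (by have := ncard_insert_le b {c}; simp at this; omega)

lemma nbhd_compOutside_pendant {z₃ t : V} (hN : Nbhd H Z = {s₁, s₂, s₃})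
    (hdeg : ∀ E ⊆ Z, E.Nonempty → 3 ≤ (Nbhd H E).ncard)
    (huniq : ∀ z ∈ Z, H.Adj s₃ z → z = z₃) (ht : t ∈ Z \ {z₃}) :
    Nbhd H (compOutside H (Z \ {z₃})ᶜ t) = {z₃, s₁, s₂} := by
  set E := compOutside H (Z \ {z₃})ᶜ t
  have hEZ : E ⊆ Z \ {z₃} := compOutside_compl_subset
  have hsub : Nbhd H E ⊆ {z₃, s₁, s₂} := fun w hw => by
    rcases nbhd_compOutside_compl_subset sdiff_subset hw with h | h
    · simp_all
    · rw [hN] at h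
      rcases h with rfl | rfl | rfl
      · simp
      · simp
      · obtain ⟨-, u, hu, hus₃⟩ := hw
        exact absurd (huniq u (hEZ hu).1 hus₃.symm) (hEZ hu).2
  refine eq_of_subset_of_ncard_le hsub ((ncard_triple_le _ _ _).trans ?_)
  exact hdeg E (hEZ.trans sdiff_subset) ⟨t, mem_compOutside_self (by simpa using ht)⟩

lemma isRootedK3_of_pendant_of_connected [Finite V] {z₃ : V} (hN : Nbhd H Z = {s₁, s₂, s₃})
    (hdeg : ∀ E ⊆ Z, E.Nonempty → 3 ≤ (Nbhd H E).ncard) (hz₃ : z₃ ∈ Z) (h₃ : H.Adj s₃ z₃)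
    (hE : (H.induce (Z \ {z₃})).Connected) (hNE : Nbhd H (Z \ {z₃}) = {z₃, s₁, s₂})
    (ih : 2 ≤ (Z \ {z₃}).ncard → Nbhd H (Z \ {z₃}) = {s₁, s₂, z₃} →
      IsRootedK3 H (Z \ {z₃}) s₁ s₂ z₃) : IsRootedK3 H Z s₁ s₂ s₃ := by
  have nb : ∀ {w}, w ∈ ({z₃, s₁, s₂} : Set V) → w ∈ Nbhd H (Z \ {z₃}) := fun hw => hNE ▸ hw
  by_cases a₂ : H.Adj s₂ z₃
  · exact isRootedK3_of_touches (E₂ := ∅) (by simp) hz₃ (by simp) h₃ (disjoint_empty _)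
      (hE.induce_insert_of_mem_nbhd (nb (by simp))) (connected_induce_insert_empty s₂)
      (touches_insert_of_mem_nbhd (nb (by simp)) (mem_insert _ _))
      (touches_insert_of_mem_nbhd (nb (by simp)) rfl) ⟨s₂, mem_insert _ _, z₃, rfl, a₂⟩
  by_cases a₁ : H.Adj s₁ z₃
  · exact isRootedK3_of_touches (E₁ := ∅) (by simp) hz₃ (by simp) h₃ (empty_disjoint _)
      (connected_induce_insert_empty s₁) (hE.induce_insert_of_mem_nbhd (nb (by simp)))
      (touches_insert_of_mem_nbhd (nb (by simp)) (mem_insert _ _)).symm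
      ⟨s₁, mem_insert _ _, z₃, rfl, a₁⟩ (touches_insert_of_mem_nbhd (nb (by simp)) rfl)
  have hNz : Nbhd H {z₃} ⊆ insert s₃ (Z \ {z₃}) := by
    rintro w ⟨hw, u, rfl, huw⟩
    by_cases hwZ : w ∈ Z
    · exact Or.inr ⟨hwZ, hw⟩
    have : w ∈ Nbhd H Z := ⟨hwZ, _, hz₃, huw⟩
    rw [hN] at this
    rcases this with rfl | rfl | rfl
    exacts [absurd huw.symm a₁, absurd huw.symm a₂, mem_insert _ _]
  have h3 := hdeg {z₃} (singleton_subset_iff.2 hz₃) (singleton_nonempty _)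
  have := (ncard_le_ncard hNz).trans (ncard_insert_le s₃ _)
  refine (ih (by omega) ?_).extend sdiff_subset hz₃ (by simp) h₃
  rw [hNE]
  ext
  simp only [mem_insert_iff, mem_singleton_iff]
  tauto

/-- If `z₃` is the only neighbour of `s₃` in `Z`, either `Z - z₃` has two components,
which become the branch sets of `s₁` and `s₂`, or `z₃` takes the role of `s₃` in a smaller
instance. -/
lemma isRootedK3_of_pendant [Finite V] {z₃ : V} (hZ2 : 2 ≤ Z.ncard)
    (hN : Nbhd H Z = {s₁, s₂, s₃}) (hdeg : ∀ E ⊆ Z, E.Nonempty → 3 ≤ (Nbhd H E).ncard)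
    (hz₃ : z₃ ∈ Z) (h₃ : H.Adj s₃ z₃) (huniq : ∀ z ∈ Z, H.Adj s₃ z → z = z₃)
    (ih : ∀ E ⊆ Z \ {z₃}, (H.induce E).Connected → 2 ≤ E.ncard →
      Nbhd H E = {s₁, s₂, z₃} → IsRootedK3 H E s₁ s₂ z₃) : IsRootedK3 H Z s₁ s₂ s₃ := by
  set comp := fun t => compOutside H (Z \ {z₃})ᶜ t
  have hsub : ∀ t, comp t ⊆ Z \ {z₃} := fun t => compOutside_compl_subset
  have hmem : ∀ t ∈ Z \ {z₃}, t ∈ comp t := fun t ht => mem_compOutside_self (by simpa using ht)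
  have hconn : ∀ t ∈ Z \ {z₃}, (H.induce (comp t)).Connected := fun t ht =>
    connected_induce_compOutside (by simpa using ht)
  have hN' : ∀ {t}, t ∈ Z \ {z₃} → Nbhd H (comp t) = {z₃, s₁, s₂} :=
    nbhd_compOutside_pendant hN hdeg huniq
  obtain ⟨t₀, ht₀, ht₀z⟩ := exists_ne_of_one_lt_ncard hZ2 z₃
  have ht₀' : t₀ ∈ Z \ {z₃} := ⟨ht₀, ht₀z⟩
  by_cases htwo : ∃ t₁ ∈ Z \ {z₃}, t₁ ∉ comp t₀
  · obtain ⟨t₁, ht₁, ht₁E⟩ := htwo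
    have hd : Disjoint (comp t₀) (comp t₁) := disjoint_left.2 fun x hx₀ hx₁ => ht₁E <| by
      have := (compOutside_eq_of_mem hx₁).symm.trans (compOutside_eq_of_mem hx₀)
      simpa [comp, this] using hmem t₁ ht₁
    have nb : ∀ {t w}, t ∈ Z \ {z₃} → w ∈ ({z₃, s₁, s₂} : Set V) → w ∈ Nbhd H (comp t) :=
      fun ht hw => hN' ht ▸ hw
    have h01 := union_subset (hsub t₀) (hsub t₁)
    exact isRootedK3_of_touches (h01.trans sdiff_subset) hz₃ (fun h => by simpa using h01 h) h₃
      hd ((hconn t₀ ht₀').induce_insert_of_mem_nbhd (nb ht₀' (by simp)))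
      ((hconn t₁ ht₁).induce_insert_of_mem_nbhd (nb ht₁ (by simp)))
      (touches_insert_of_mem_nbhd (nb ht₀' (by simp)) (mem_insert _ _))
      (touches_insert_of_mem_nbhd (nb ht₀' (by simp)) rfl)
      (touches_insert_of_mem_nbhd (nb ht₁ (by simp)) rfl)
  have hE₀ : comp t₀ = Z \ {z₃} :=
    (hsub t₀).antisymm fun t ht => by by_contra h; exact htwo ⟨t, ht, h⟩
  exact isRootedK3_of_pendant_of_connected hN hdeg hz₃ h₃ (hE₀ ▸ hconn t₀ ht₀')
    (hE₀ ▸ hN' ht₀') (ih _ subset_rfl (hE₀ ▸ hconn t₀ ht₀'))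

/-- Join neighbours of `s₁` and `s₂` by a path in `Z` and attach `s₃` according to where its
neighbours lie; if `s₃` has only one neighbour `z` in `Z`, recurse with `z` in place of `s₃`. -/
theorem isRootedK3_of_nbhd_eq [Finite V] (hZ : (H.induce Z).Connected) (hZ2 : 2 ≤ Z.ncard)
    (hN : Nbhd H Z = {s₁, s₂, s₃}) (hdeg : ∀ E ⊆ Z, E.Nonempty → 3 ≤ (Nbhd H E).ncard) :
    IsRootedK3 H Z s₁ s₂ s₃ := by
  induction hn : Z.ncard using Nat.strong_induction_on generalizing Z s₃ with
  | _ n ih =>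
  obtain ⟨-, u, hu, hus₃⟩ : s₃ ∈ Nbhd H Z := by simp [hN]
  by_cases hpend : ∃ z₃ ∈ Z, ∀ z ∈ Z, H.Adj s₃ z → z = z₃
  · obtain ⟨z₃, hz₃, huniq⟩ := hpend
    refine isRootedK3_of_pendant hZ2 hN hdeg hz₃ (huniq u hu hus₃.symm ▸ hus₃.symm) huniq
      fun E hE hEc hE2 hEN => ih E.ncard ?_ hEc hE2 hEN
        (fun F hF => hdeg F (hF.trans (hE.trans sdiff_subset))) rfl
    rw [← hn]
    exact ncard_lt_ncard (hE.trans_ssubset (sdiff_singleton_ssubset.2 hz₃))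
  push Not at hpend
  obtain ⟨w, hw, hws₃, hwu⟩ := hpend u hu
  exact isRootedK3_of_two_adj hZ hN hdeg hw hu hwu hws₃ hus₃.symm

end RootedK3

section BranchSets

variable {V : Type*} {H : SimpleGraph V} {S : Set V} {a b c : V}

lemma isRootedModel_top_singleton (hS : S.Subsingleton) :
    IsRootedModel H ⊤ S fun v => {v} where
  mem _ _ := rfl
  connected v _ := connected_induce_singleton v
  disjoint _ hu _ hv huv := absurd (hS hu hv) huv
  touches _ hu _ hv huv := absurd (hS hu hv) huv.ne

lemma exists_isRootedModel_top_pair {A₁ A₂ : Set V} (hab : a ≠ b) (h₁ : a ∈ A₁) (h₂ : b ∈ A₂)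
    (c₁ : (H.induce A₁).Connected) (c₂ : (H.induce A₂).Connected) (d : Disjoint A₁ A₂)
    (t : Touches H A₁ A₂) :
    ∃ A, IsRootedModel H ⊤ {a, b} A ∧ ∀ v ∈ ({a, b} : Set V), A v ⊆ A₁ ∪ A₂ := by
  classical
  obtain ⟨A, ha, hb⟩ : ∃ A : V → Set V, A a = A₁ ∧ A b = A₂ :=
    ⟨fun v => if v = a then A₁ else A₂, by simp, by simp [hab.symm]⟩
  refine ⟨A, ⟨?_, ?_, ?_, ?_⟩, ?_⟩
  · rintro v (rfl | rfl) <;> simpa [ha, hb]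
  · rintro v (rfl | rfl)
    exacts [ha ▸ c₁, hb ▸ c₂]
  · rintro u (rfl | rfl) v (rfl | rfl) huv <;> simp_all [Disjoint.symm]
  · rintro u (rfl | rfl) v (rfl | rfl) huv <;> simp_all [Touches.symm]
  · rintro v (rfl | rfl) <;> simp [ha, hb]

lemma exists_isRootedModel_top_triple {A₁ A₂ A₃ : Set V} (hab : a ≠ b) (hac : a ≠ c)
    (hbc : b ≠ c) (h₁ : a ∈ A₁) (h₂ : b ∈ A₂) (h₃ : c ∈ A₃) (c₁ : (H.induce A₁).Connected)
    (c₂ : (H.induce A₂).Connected) (c₃ : (H.induce A₃).Connected) (d₁₂ : Disjoint A₁ A₂)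
    (d₁₃ : Disjoint A₁ A₃) (d₂₃ : Disjoint A₂ A₃) (t₁₂ : Touches H A₁ A₂)
    (t₁₃ : Touches H A₁ A₃) (t₂₃ : Touches H A₂ A₃) :
    ∃ A, IsRootedModel H ⊤ {a, b, c} A ∧ ∀ v ∈ ({a, b, c} : Set V), A v ⊆ A₁ ∪ A₂ ∪ A₃ := by
  classical
  obtain ⟨A, ha, hb, hc⟩ : ∃ A : V → Set V, A a = A₁ ∧ A b = A₂ ∧ A c = A₃ :=
    ⟨fun v => if v = a then A₁ else if v = b then A₂ else A₃, by simp, by simp [hab.symm],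
      by simp [hac.symm, hbc.symm]⟩
  refine ⟨A, ⟨?_, ?_, ?_, ?_⟩, ?_⟩
  · rintro v (rfl | rfl | rfl) <;> simpa [ha, hb, hc]
  · rintro v (rfl | rfl | rfl)
    exacts [ha ▸ c₁, hb ▸ c₂, hc ▸ c₃]
  · rintro u (rfl | rfl | rfl) v (rfl | rfl | rfl) huv <;> simp_all [Disjoint.symm]
  · rintro u (rfl | rfl | rfl) v (rfl | rfl | rfl) huv <;> simp_all [Touches.symm]
  · rintro v (rfl | rfl | rfl) <;> intro x hx <;> simp_all

lemma IsRootedK3.exists_isRootedModel {Z : Set V} (h : IsRootedK3 H Z a b c)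
    (hN : ({a, b, c} : Set V) ∩ Z = ∅) (hab : a ≠ b) (hac : a ≠ c) (hbc : b ≠ c) :
    ∃ A, IsRootedModel H ⊤ {a, b, c} A ∧ ∀ v ∈ ({a, b, c} : Set V), A v ⊆ {a, b, c} ∪ Z := by
  obtain ⟨B₁, B₂, B₃, h₁, h₂, h₃, d₁₂, d₁₃, d₂₃, c₁, c₂, c₃, t₁₂, t₁₃, t₂₃⟩ := h
  have hZ : ∀ {s}, s ∈ ({a, b, c} : Set V) → ∀ {B}, B ⊆ Z → s ∉ B := fun hs _ hB hsB =>
    (eq_empty_iff_forall_notMem.1 hN) _ ⟨hs, hB hsB⟩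
  have d : ∀ {s t B B'}, s ∈ ({a, b, c} : Set V) → t ∈ ({a, b, c} : Set V) → s ≠ t →
      B ⊆ Z → B' ⊆ Z → Disjoint B B' → Disjoint (insert s B) (insert t B') :=
    fun hs ht hst hB hB' hBB' => disjoint_insert_left.2
      ⟨fun h => h.elim hst (hZ hs hB'), disjoint_insert_right.2 ⟨hZ ht hB, hBB'⟩⟩
  obtain ⟨A, hA, hAsub⟩ := exists_isRootedModel_top_triple hab hac hbc (mem_insert a B₁)
    (mem_insert b B₂) (mem_insert c B₃) c₁ c₂ c₃ (d (by simp) (by simp) hab h₁ h₂ d₁₂)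
    (d (by simp) (by simp) hac h₁ h₃ d₁₃) (d (by simp) (by simp) hbc h₂ h₃ d₂₃) t₁₂ t₁₃ t₂₃
  have hsub : insert a B₁ ∪ insert b B₂ ∪ insert c B₃ ⊆ {a, b, c} ∪ Z :=
    union_subset (union_subset (insert_subset (Or.inl (by simp)) (h₁.trans subset_union_right))
      (insert_subset (Or.inl (by simp)) (h₂.trans subset_union_right)))
      (insert_subset (Or.inl (by simp)) (h₃.trans subset_union_right))
  exact ⟨A, hA, fun v hv => (hAsub v hv).trans hsub⟩

end BranchSets

section Decompositions

variable {α β : Type*} {TA : SimpleGraph α} {TB : SimpleGraph β}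

lemma SimpleGraph.IsTree.sum_sup_edge [Finite α] [Finite β] (hA : TA.IsTree) (hB : TB.IsTree)
    (a : α) (b : β) : (TA.sum TB ⊔ SimpleGraph.edge (.inl a) (.inr b)).IsTree := by
  rw [SimpleGraph.isTree_iff_connected_and_card] at hA hB ⊢
  refine ⟨hA.1.sum_sup_edge hB.1, ?_⟩
  have hnew : s(Sum.inl a, Sum.inr b) ∉ (TA.sum TB).edgeSet := by simp
  rw [SimpleGraph.edgeSet_sup, SimpleGraph.edgeSet_edge_of_ne Sum.inl_ne_inr, Nat.card_coe_set_eq,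
    ncard_union_eq (disjoint_singleton_right.2 hnew), ncard_singleton, ← Nat.card_coe_set_eq,
    Nat.card_congr SimpleGraph.edgeSetSumEquiv, Nat.card_sum, Nat.card_sum, ← hA.2, ← hB.2]
  ring

lemma SimpleGraph.Connected.induce_image {T : SimpleGraph α} {T' : SimpleGraph β} (f : T →g T')
    {K : Set α} (h : (T.induce K).Connected) : (T'.induce (f '' K)).Connected :=
  h.map (⟨fun x => ⟨f x, x.1, x.2, rfl⟩, fun hxy => f.map_adj hxy⟩ :
      T.induce K →g T'.induce (f '' K)) (by rintro ⟨_, x, hx, rfl⟩; exact ⟨⟨x, hx⟩, rfl⟩)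

variable {V : Type*} {G : SimpleGraph V} {X U C S : Set V}

def GoodTorso (G : SimpleGraph V) (B : Set V) : Prop :=
  IsMinor (torso G B) G ∧ (Quasi4Connected (torso G B) ∨ (torso G B = ⊤ ∧ B.ncard ≤ 4))

/-- A decomposition of the part `U` of `H = G⟦X⟧`. Applied to single vertices and to edges, the
clique condition says that `(T, β)` covers `H[U]`; it is needed for all cliques because a
separator is a clique in the torsos of the parts that it cuts off. -/
structure IsTorsoDecomp (G : SimpleGraph V) (X U : Set V) {ι : Type*} (T : SimpleGraph ι)
    (β : ι → Set V) : Prop where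
  isTree : T.IsTree
  subset : ∀ t, β t ⊆ U
  connected : ∀ v ∈ U, (T.induce {t | v ∈ β t}).Connected
  adhesion : ∀ s t, T.Adj s t → (β s ∩ β t).ncard ≤ 3
  goodTorso : ∀ t, GoodTorso G (β t)
  clique : ∀ W ⊆ U, (spanningTorso G X).IsClique W → ∃ t, W ⊆ β t

lemma isTorsoDecomp_single (h : GoodTorso G X) :
    IsTorsoDecomp G X X (⊥ : SimpleGraph Unit) fun _ => X where
  isTree := .of_subsingleton
  subset _ := subset_rfl
  connected v hv := by
    rw [SimpleGraph.connected_iff]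
    exact ⟨fun a b => by rw [Subsingleton.elim a b], ⟨⟨(), hv⟩⟩⟩
  adhesion _ _ h := h.elim
  goodTorso _ := h
  clique W hW _ := ⟨(), hW⟩

lemma IsTorsoDecomp.connected_glue {ι κ : Type*} {T : SimpleGraph ι} {β : ι → Set V}
    {T' : SimpleGraph κ} {β' : κ → Set V} (hP : IsTorsoDecomp G X U T β)
    (hQ : IsTorsoDecomp G (C ∪ S) (C ∪ S) T' β') {c : ι} {r : κ} (hc : S ⊆ β c)
    (hr : S ⊆ β' r) (hUC : Disjoint U C) {v : V} (hv : v ∈ U ∪ C) :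
    ((T.sum T' ⊔ SimpleGraph.edge (.inl c) (.inr r)).induce
      {t | v ∈ Sum.elim β β' t}).Connected := by
  set T'' := T.sum T' ⊔ SimpleGraph.edge (.inl c) (.inr r)
  have hset : {t | v ∈ Sum.elim β β' t} =
      Sum.inl '' {t | v ∈ β t} ∪ Sum.inr '' {t | v ∈ β' t} := by
    ext (t | t) <;> simp
  have hl : v ∈ U → (T''.induce (Sum.inl '' {t | v ∈ β t})).Connected := fun hvU =>
    (hP.connected v hvU).induce_image
      ((SimpleGraph.Hom.ofLE le_sup_left).comp SimpleGraph.Embedding.sumInl.toHom)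
  have hr' : v ∈ C ∪ S → (T''.induce (Sum.inr '' {t | v ∈ β' t})).Connected := fun hvCS =>
    (hQ.connected v hvCS).induce_image
      ((SimpleGraph.Hom.ofLE le_sup_left).comp SimpleGraph.Embedding.sumInr.toHom)
  rw [hset]
  by_cases hvS : v ∈ S
  · exact SimpleGraph.connected_induce_union (hl (hP.subset c (hc hvS))).preconnected
      (hr' (Or.inr hvS)).preconnected ⟨c, hc hvS, rfl⟩ ⟨r, hr hvS, rfl⟩
      (by simp [T'', SimpleGraph.edge_adj])
  rcases hv with hvU | hvC
  · have : {t | v ∈ β' t} = ∅ := eq_empty_of_forall_notMem fun t ht =>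
      (hQ.subset t ht).elim (disjoint_left.1 hUC hvU) hvS
    rw [this, image_empty, union_empty]
    exact hl hvU
  · have : {t | v ∈ β t} = ∅ := eq_empty_of_forall_notMem fun t ht =>
      disjoint_left.1 hUC (hP.subset t ht) hvC
    rw [this, image_empty, empty_union]
    exact hr' (Or.inl hvC)

lemma IsTorsoDecomp.glue [Finite V] {ι κ : Type*} [Finite ι] [Finite κ] {T : SimpleGraph ι}
    {β : ι → Set V} {T' : SimpleGraph κ} {β' : κ → Set V} (hP : IsTorsoDecomp G X U T β)
    (hQ : IsTorsoDecomp G (C ∪ S) (C ∪ S) T' β') {c : ι} {r : κ} (hc : S ⊆ β c)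
    (hr : S ⊆ β' r) (hS : S.ncard ≤ 3) (hSU : S ⊆ U) (hUC : Disjoint U C)
    (hCSX : C ∪ S ⊆ X) (hC : ∀ u ∈ C, ∀ v, (spanningTorso G X).Adj u v → v ∈ C ∪ S) :
    IsTorsoDecomp G X (U ∪ C) (T.sum T' ⊔ SimpleGraph.edge (.inl c) (.inr r))
      (Sum.elim β β') where
  isTree := hP.isTree.sum_sup_edge hQ.isTree c r
  subset := by
    rintro (t | t) v hv
    · exact Or.inl (hP.subset t hv)
    · exact (hQ.subset t hv).elim Or.inr fun h => Or.inl (hSU h)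
  connected v hv := hP.connected_glue hQ hc hr hUC hv
  adhesion := by
    have hcr : β c ∩ β' r ⊆ S := fun v ⟨hv, hv'⟩ =>
      (hQ.subset r hv').resolve_left (disjoint_left.1 hUC (hP.subset c hv))
    rintro (s | s) (t | t) hst
    · exact hP.adhesion s t (by simpa [SimpleGraph.edge_adj] using hst)
    · obtain ⟨rfl, rfl⟩ : s = c ∧ t = r := by simpa [SimpleGraph.edge_adj] using hst
      exact (ncard_le_ncard hcr).trans hS
    · obtain ⟨rfl, rfl⟩ : s = r ∧ t = c := by simpa [SimpleGraph.edge_adj] using hst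
      exact (ncard_le_ncard ((inter_comm _ _).subset.trans hcr)).trans hS
    · exact hQ.adhesion s t (by simpa [SimpleGraph.edge_adj] using hst)
  goodTorso := by
    rintro (t | t)
    exacts [hP.goodTorso t, hQ.goodTorso t]
  clique W hW hWc := by
    by_cases hWC : (W ∩ C).Nonempty
    · obtain ⟨w, hwW, hwC⟩ := hWC
      have hWCS : W ⊆ C ∪ S := fun x hx => by
        by_cases hxw : x = w
        · exact hxw ▸ Or.inl hwC
        · exact hC w hwC x (hWc hwW hx (Ne.symm hxw))
      obtain ⟨t, ht⟩ := hQ.clique W hWCS fun a ha b hb hab =>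
        spanningTorso_adj_of_subset hCSX (hWc ha hb hab) (hWCS ha) (hWCS hb)
      exact ⟨.inr t, ht⟩
    · obtain ⟨t, ht⟩ := hP.clique W
        (fun x hx => (hW hx).resolve_right fun hxC => hWC ⟨x, hx, hxC⟩) hWc
      exact ⟨.inl t, ht⟩

end Decompositions

section Splitting

variable {V : Type*} {G : SimpleGraph V} {X Y S Z D D' E : Set V} {v y : V}

/-- A component of `G⟦X⟧ - S`; `D ⊆ X` excludes the isolated vertices of `spanningTorso G X`
outside `X`. -/
def IsTorsoComp (G : SimpleGraph V) (X S D : Set V) : Prop :=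
  IsCompOutside (spanningTorso G X) S D ∧ D ⊆ X

lemma isTorsoComp_compOutside (hv : v ∈ X) (hvS : v ∉ S) :
    IsTorsoComp G X S (compOutside (spanningTorso G X) S v) :=
  ⟨isCompOutside_compOutside hvS, fun _ hu => hu.2.mem_of_spanningTorso hv⟩

lemma IsTorsoComp.nbhd_eq [Finite V] (hmin : SepOrderGE G X S.ncard) (hD : IsTorsoComp G X S D)
    (hD' : IsTorsoComp G X S D') (hne : D ≠ D') : Nbhd (spanningTorso G X) D = S := by
  obtain ⟨t, ht⟩ := hD'.1.nonempty
  have hN := hD.1.nbhd_subset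
  refine eq_of_subset_of_ncard_le hN (hmin.le_ncard_nbhd hD.2 hD.1.nonempty (hD'.2 ht)
    (disjoint_right.1 (hD.1.disjoint_of_ne hD'.1 hne) ht) fun h => hD'.1.1 ht (hN h))

lemma IsTorsoComp.le_ncard_nbhd (hmin : SepOrderGE G X S.ncard)
    (hD : IsTorsoComp G X S D) (hD' : IsTorsoComp G X S D') (hne : D ≠ D') (hED' : E ⊆ D')
    (hE : E.Nonempty) : S.ncard ≤ (Nbhd (spanningTorso G X) E).ncard := by
  obtain ⟨t, ht⟩ := hD.1.nonempty
  have htD' : t ∉ D' := disjoint_left.1 (hD.1.disjoint_of_ne hD'.1 hne) ht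
  refine hmin.le_ncard_nbhd (hED'.trans hD'.2) hE (hD.2 ht) (fun h => htD' (hED' h)) ?_
  rintro ⟨-, u, hu, hut⟩
  exact (hD'.1.mem_or_mem_of_adj (hED' hu) hut).elim htD' (hD.1.1 ht)

lemma IsTorsoSep.subset_of_isTorsoComp (hsep : IsTorsoSep G X Y S Z) (hD : IsTorsoComp G X S D)
    (hy : y ∈ D) (hyY : y ∈ Y) : D ⊆ Y := by
  intro u hu
  obtain ⟨p, hp⟩ := hD.1.2.1.reachableIn hy hu
  induction p with
  | nil => exact hyY
  | @cons a c u hac p ih =>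
    have hc : c ∈ D := hp c (by simp)
    refine ih hc ?_ hu fun t ht => hp t (by simp [ht])
    have : c ∈ Y ∪ S ∪ Z := hsep.1 ▸ hD.2 hc
    rcases this with (hcY | hcS) | hcZ
    exacts [hcY, absurd hcS (hD.1.1 hc), absurd hac (hsep.2.2.2.2 a hyY c hcZ)]

lemma IsTorsoSep.subset_of_forall_isTorsoComp (hsep : IsTorsoSep G X Y S Z)
    (hall : ∀ D'', IsTorsoComp G X S D'' → D'' = D ∨ D'' = D') (hDY : D ⊆ Y) : Z ⊆ D' := by
  intro z hz
  have hzX : z ∈ X := hsep.right_subset hz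
  have hzS : z ∉ S := disjoint_right.1 hsep.2.2.2.1 hz
  have hzC := mem_compOutside_self (G := spanningTorso G X) hzS
  rcases hall _ (isTorsoComp_compOutside hzX hzS) with h | h
  · exact absurd hz (disjoint_left.1 hsep.2.2.1 (hDY (h ▸ hzC)))
  · exact h ▸ hzC

/-- The two components are the two sides of the separation. -/
lemma IsTorsoSep.two_le_ncard_of_isTorsoComp [Finite V] (hsep : IsTorsoSep G X Y S Z)
    (hY : 2 ≤ Y.ncard) (hZ : 2 ≤ Z.ncard)
    (hall : ∀ D'', IsTorsoComp G X S D'' → D'' = D ∨ D'' = D') : 2 ≤ D'.ncard := by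
  obtain ⟨y, hy⟩ := nonempty_of_ncard_ne_zero (s := Y) (by omega)
  have hyS : y ∉ S := disjoint_left.1 hsep.2.1 hy
  have hCy := isTorsoComp_compOutside (G := G) (hsep.left_subset hy) hyS
  have hCyY := hsep.subset_of_isTorsoComp hCy (mem_compOutside_self hyS) hy
  rcases hall _ hCy with h | h
  · exact hZ.trans (ncard_le_ncard (hsep.subset_of_forall_isTorsoComp hall (h ▸ hCyY)))
  refine hY.trans (ncard_le_ncard (hsep.symm.subset_of_forall_isTorsoComp hall ?_))
  obtain ⟨z, hz⟩ := nonempty_of_ncard_ne_zero (s := Z) (by omega)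
  have hzS : z ∉ S := disjoint_right.1 hsep.2.2.2.1 hz
  have hCz := isTorsoComp_compOutside (G := G) (hsep.right_subset hz) hzS
  have hCzZ := hsep.symm.subset_of_isTorsoComp hCz (mem_compOutside_self hzS) hz
  rcases hall _ hCz with h' | h'
  · exact h' ▸ hCzZ
  · have : y ∈ compOutside (spanningTorso G X) S z := h' ▸ h ▸ mem_compOutside_self hyS
    exact absurd (hCzZ this) (disjoint_left.1 hsep.2.2.1 hy)

lemma IsTorsoComp.touches [Finite V] (hmin : SepOrderGE G X S.ncard) (hD : IsTorsoComp G X S D)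
    (hD' : IsTorsoComp G X S D') (hne : D ≠ D') {s : V} (hs : s ∈ S) :
    Touches (spanningTorso G X) D' {s} :=
  touches_singleton_right_of_mem_nbhd ((hD'.nbhd_eq hmin hD hne.symm).symm ▸ hs)

lemma IsTorsoComp.disjoint_insert (hD : IsTorsoComp G X S D)
    (hD' : IsTorsoComp G X S D') (hne : D ≠ D') {s : V} (hs : s ∈ S) :
    Disjoint (insert s D') D :=
  disjoint_insert_left.2 ⟨fun h => hD.1.1 h hs, hD'.1.disjoint_of_ne hD.1 hne.symm⟩

lemma IsTorsoComp.connected_insert [Finite V] (hmin : SepOrderGE G X S.ncard)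
    (hD : IsTorsoComp G X S D) (hD' : IsTorsoComp G X S D') (hne : D ≠ D') {s : V}
    (hs : s ∈ S) : ((spanningTorso G X).induce (insert s D')).Connected :=
  hD'.1.2.1.induce_insert_of_touches (hD.touches hmin hD' hne hs).symm

lemma exists_branchSets_of_ncard_le_two [Finite V] (hmin : SepOrderGE G X S.ncard)
    (hS : S.ncard ≤ 2) (hD : IsTorsoComp G X S D) (hD' : IsTorsoComp G X S D') (hne : D ≠ D') :
    ∃ A, IsRootedModel (spanningTorso G X) ⊤ S A ∧ ∀ s ∈ S, Disjoint (A s) D := by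
  rcases Nat.lt_or_ge S.ncard 2 with h | h
  · exact ⟨_, isRootedModel_top_singleton (ncard_le_one_iff_subsingleton.1 (by omega)),
      fun s hs => disjoint_singleton_left.2 fun h => hD.1.1 h hs⟩
  obtain ⟨a, b, hab, rfl⟩ := ncard_eq_two.1 (le_antisymm hS h)
  obtain ⟨A, hA, hsub⟩ := exists_isRootedModel_top_pair hab (mem_insert a D') (mem_singleton b)
    (hD.connected_insert hmin hD' hne (by simp)) (connected_induce_singleton b)
    (disjoint_singleton_right.2 fun h => h.elim (hab ·.symm) (hD'.1.1 · (by simp)))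
    ((hD.touches hmin hD' hne (s := b) (by simp)).mono (subset_insert _ _) subset_rfl)
  exact ⟨A, hA, fun s hs => disjoint_of_subset_left (hsub s hs) (disjoint_union_left.2
    ⟨hD.disjoint_insert hD' hne (s := a) (by simp),
      disjoint_singleton_left.2 (hD.1.1 · (by simp))⟩)⟩

/-- With a third component `D₂`, the branch sets are `a + D'`, `b + D₂` and `c`. -/
lemma exists_branchSets_of_three_comps [Finite V] (hmin : SepOrderGE G X S.ncard)
    (hS : S.ncard = 3) (hD : IsTorsoComp G X S D) (hD' : IsTorsoComp G X S D') {D₂ : Set V}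
    (hD₂ : IsTorsoComp G X S D₂) (hne : D ≠ D') (hne₂ : D₂ ≠ D) (hne₂' : D₂ ≠ D') :
    ∃ A, IsRootedModel (spanningTorso G X) ⊤ S A ∧ ∀ s ∈ S, Disjoint (A s) D := by
  obtain ⟨a, b, c, hab, hac, hbc, rfl⟩ := ncard_eq_three.1 hS
  have hd : Disjoint (insert a D') (insert b D₂) := disjoint_insert_left.2
    ⟨fun h => h.elim hab fun h => hD₂.1.1 h (by simp), disjoint_insert_right.2
      ⟨(hD'.1.1 · (by simp)), hD'.1.disjoint_of_ne hD₂.1 (Ne.symm hne₂')⟩⟩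
  obtain ⟨A, hA, hsub⟩ := exists_isRootedModel_top_triple hab hac hbc (mem_insert a D')
    (mem_insert b D₂) (mem_singleton c) (hD.connected_insert hmin hD' hne (by simp))
    (hD.connected_insert hmin hD₂ hne₂.symm (by simp)) (connected_induce_singleton c) hd
    (disjoint_singleton_right.2 fun h => h.elim (hac ·.symm) (hD'.1.1 · (by simp)))
    (disjoint_singleton_right.2 fun h => h.elim (hbc ·.symm) (hD₂.1.1 · (by simp)))
    ((hD.touches hmin hD' hne (s := b) (by simp)).mono (subset_insert _ _) (by simp))
    ((hD.touches hmin hD' hne (s := c) (by simp)).mono (subset_insert _ _) subset_rfl)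
    ((hD.touches hmin hD₂ hne₂.symm (s := c) (by simp)).mono (subset_insert _ _) subset_rfl)
  exact ⟨A, hA, fun s hs => disjoint_of_subset_left (hsub s hs) (disjoint_union_left.2
    ⟨disjoint_union_left.2 ⟨hD.disjoint_insert hD' hne (s := a) (by simp),
      hD.disjoint_insert hD₂ hne₂.symm (s := b) (by simp)⟩,
      disjoint_singleton_left.2 (hD.1.1 · (by simp))⟩)⟩

lemma exists_branchSets_of_two_comps [Finite V] (hmin : SepOrderGE G X S.ncard)
    (hS : S.ncard = 3) (hD : IsTorsoComp G X S D) (hD' : IsTorsoComp G X S D') (hne : D ≠ D')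
    (hD'2 : 2 ≤ D'.ncard) :
    ∃ A, IsRootedModel (spanningTorso G X) ⊤ S A ∧ ∀ s ∈ S, Disjoint (A s) D := by
  obtain ⟨a, b, c, hab, hac, hbc, rfl⟩ := ncard_eq_three.1 hS
  have hK := isRootedK3_of_nbhd_eq hD'.1.2.1 hD'2 (hD'.nbhd_eq hmin hD hne.symm)
    fun E hE hEne => hS ▸ hD.le_ncard_nbhd hmin hD' hne hE hEne
  obtain ⟨A, hA, hsub⟩ := hK.exists_isRootedModel
    (eq_empty_of_forall_notMem fun s ⟨hs, hs'⟩ => hD'.1.1 hs' hs) hab hac hbc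
  exact ⟨A, hA, fun s hs => disjoint_of_subset_left (hsub s hs) (disjoint_union_left.2
    ⟨disjoint_left.2 fun t ht htD => hD.1.1 htD ht, hD'.1.disjoint_of_ne hD.1 hne.symm⟩)⟩

lemma exists_branchSets [Finite V] (hmin : SepOrderGE G X S.ncard) (hS : S.ncard ≤ 3)
    (hD : IsTorsoComp G X S D) (hD' : IsTorsoComp G X S D') (hne : D ≠ D')
    (hbig : S.ncard = 3 → (∀ D'', IsTorsoComp G X S D'' → D'' = D ∨ D'' = D') →
      2 ≤ D'.ncard) :
    ∃ A, IsRootedModel (spanningTorso G X) ⊤ S A ∧ ∀ s ∈ S, Disjoint (A s) D := by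
  rcases Nat.lt_or_ge S.ncard 3 with h | h
  · exact exists_branchSets_of_ncard_le_two hmin (by omega) hD hD' hne
  by_cases h₂ : ∃ D₂, IsTorsoComp G X S D₂ ∧ D₂ ≠ D ∧ D₂ ≠ D'
  · obtain ⟨D₂, hD₂, hne₂, hne₂'⟩ := h₂
    exact exists_branchSets_of_three_comps hmin (by omega) hD hD' hD₂ hne hne₂ hne₂'
  push Not at h₂
  exact exists_branchSets_of_two_comps hmin (by omega) hD hD' hne (hbig (by omega)
    fun D'' hD'' => or_iff_not_imp_left.2 (h₂ D'' hD''))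

end Splitting

section Assembly

variable {V : Type*} {G : SimpleGraph V} {X X' U Y S S' Z C D D' : Set V} {M : V → Set V}

def HasTorsoDecomp (G : SimpleGraph V) (X U S : Set V) : Prop :=
  ∃ (ι : Type) (_ : Fintype ι) (T : SimpleGraph ι) (β : ι → Set V),
    IsTorsoDecomp G X U T β ∧ ∃ c, S ⊆ β c

lemma hasTorsoDecomp_single (h : GoodTorso G X) : HasTorsoDecomp G X X ∅ :=
  ⟨Unit, inferInstance, ⊥, fun _ => X, isTorsoDecomp_single h, (), empty_subset _⟩

lemma HasTorsoDecomp.anti (h : HasTorsoDecomp G X U S) (hS : S' ⊆ S) : HasTorsoDecomp G X U S' := by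
  obtain ⟨ι, _, T, β, hT, c, hc⟩ := h
  exact ⟨ι, inferInstance, T, β, hT, c, hS.trans hc⟩

lemma HasTorsoDecomp.of_isClique (h : HasTorsoDecomp G X X S') (hSX : S ⊆ X)
    (hS : (spanningTorso G X).IsClique S) : HasTorsoDecomp G X X S := by
  obtain ⟨ι, _, T, β, hT, -⟩ := h
  exact ⟨ι, inferInstance, T, β, hT, hT.clique S hSX hS⟩

lemma HasTorsoDecomp.mono_region (h : HasTorsoDecomp G X' X' S) (hX' : X' ⊆ X) :
    HasTorsoDecomp G X X' S := by
  obtain ⟨ι, _, T, β, hT, hc⟩ := h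
  refine ⟨ι, inferInstance, T, β, { hT with clique := fun W hW hWc => ?_ }, hc⟩
  exact hT.clique W hW fun a ha b hb hab =>
    spanningTorso_adj_of_subset hX' (hWc ha hb hab) (hW ha) (hW hb)

lemma HasTorsoDecomp.glue [Finite V] (hP : HasTorsoDecomp G X U S)
    (hQ : HasTorsoDecomp G (C ∪ S) (C ∪ S) S) (hS : S.ncard ≤ 3) (hSU : S ⊆ U)
    (hUC : Disjoint U C) (hCSX : C ∪ S ⊆ X)
    (hC : ∀ u ∈ C, ∀ v, (spanningTorso G X).Adj u v → v ∈ C ∪ S) :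
    HasTorsoDecomp G X (U ∪ C) S := by
  obtain ⟨ι, _, T, β, hP, c, hc⟩ := hP
  obtain ⟨κ, _, T', β', hQ, r, hr⟩ := hQ
  exact ⟨ι ⊕ κ, inferInstance, _, _, hP.glue hQ hc hr hS hSU hUC hCSX hC, .inl c, hc⟩

lemma HasTorsoDecomp.biUnion [Finite V] {F : Finset (Set V)} (h : HasTorsoDecomp G X U S)
    (hS : S.ncard ≤ 3) (hSU : S ⊆ U) (hFU : ∀ C ∈ F, Disjoint U C)
    (hFd : (F : Set (Set V)).PairwiseDisjoint id)
    (hF : ∀ C ∈ F, HasTorsoDecomp G (C ∪ S) (C ∪ S) S ∧ C ∪ S ⊆ X ∧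
      ∀ u ∈ C, ∀ v, (spanningTorso G X).Adj u v → v ∈ C ∪ S) :
    HasTorsoDecomp G X (U ∪ ⋃ C ∈ F, C) S := by
  classical
  induction F using Finset.induction_on with
  | empty => simpa using h
  | @insert C F hCF ih =>
    have ih' := ih (fun C' hC' => hFU C' (Finset.mem_insert_of_mem hC'))
      (hFd.subset (by simp)) (fun C' hC' => hF C' (Finset.mem_insert_of_mem hC'))
    obtain ⟨hQ, hCS, hC⟩ := hF C (Finset.mem_insert_self _ _)
    have hdisj : Disjoint (U ∪ ⋃ C' ∈ F, C') C := disjoint_union_left.2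
      ⟨hFU C (Finset.mem_insert_self _ _), disjoint_iUnion₂_left.2 fun C' hC' =>
        hFd (by simp [hC']) (by simp) fun h => hCF (h ▸ hC')⟩
    have := ih'.glue hQ hS (hSU.trans subset_union_left) hdisj hCS hC
    rwa [Finset.set_biUnion_insert, union_comm C, ← union_assoc]

end Assembly

section MainInduction

variable {V : Type*} {G : SimpleGraph V} {X Y S Z D D' : Set V} {M : V → Set V}

/-- `D'` is a component of `G⟦X⟧ - (D ∪ S)` with neighbourhood `S`. -/
lemma IsTorsoComp.isClique_spanningTorso [Finite V] (hmin : SepOrderGE G X S.ncard)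
    (hD : IsTorsoComp G X S D) (hD' : IsTorsoComp G X S D') (hne : D ≠ D') (hSX : S ⊆ X) :
    (spanningTorso G (D ∪ S)).IsClique S := by
  intro s hs s' hs' hss'
  have hN := hD'.nbhd_eq hmin hD hne.symm
  have hcomp : IsCompOutside (spanningTorso G X) (D ∪ S) D' :=
    ⟨fun t ht h => h.elim (disjoint_left.1 (hD'.1.disjoint_of_ne hD.1 hne.symm) ht)
      (hD'.1.1 ht), hD'.1.2.1, fun u hu w hw huw => hD'.1.2.2 u hu w (hw ∘ Or.inr) huw⟩
  rw [← spanningTorso_spanningTorso (union_subset hD.2 hSX)]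
  exact spanningTorso_adj_of_mem_nbhd hss' (Or.inr hs) (Or.inr hs') hcomp (hN ▸ hs) (hN ▸ hs')

lemma hasTorsoDecomp_union_of_isTorsoComp [Finite V]
    (ih : ∀ X' ⊂ X, ∀ M', IsRootedModel G (spanningTorso G X') X' M' → HasTorsoDecomp G X' X' ∅)
    (hM : IsRootedModel G (spanningTorso G X) X M) (hSX : S ⊆ X)
    (hmin : SepOrderGE G X S.ncard) (hS : S.ncard ≤ 3) (hD : IsTorsoComp G X S D)
    (hD' : IsTorsoComp G X S D') (hne : D ≠ D')
    (hbig : S.ncard = 3 → (∀ D'', IsTorsoComp G X S D'' → D'' = D ∨ D'' = D') →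
      2 ≤ D'.ncard) :
    HasTorsoDecomp G (D ∪ S) (D ∪ S) S := by
  classical
  obtain ⟨A, hA, hAD⟩ := exists_branchSets hmin hS hD hD' hne hbig
  have hDS : D ∪ S ⊆ X := union_subset hD.2 hSX
  have hA' := isRootedModel_spanningTorso_union hDS
    (fun _ hu _ huv => hD.1.mem_or_mem_of_adj hu huv) hA hAD
  obtain ⟨t, ht⟩ := hD'.1.nonempty
  have hlt : D ∪ S ⊂ X := ssubset_of_subset_not_subset hDS fun h =>
    (h (hD'.2 ht)).elim (disjoint_left.1 (hD'.1.disjoint_of_ne hD.1 hne.symm) ht) (hD'.1.1 ht)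
  exact (ih _ hlt _ (hM.comp hA' fun v hv => hA'.subset_of_spanningTorso hDS hv)).of_isClique
    subset_union_right (hD.isClique_spanningTorso hmin hD' hne hSX)

lemma union_biUnion_isTorsoComp_eq [Finite V] {D₀ : Set V} (hSX : S ⊆ X) (hD₀ : IsTorsoComp G X S D₀) :
    (D₀ ∪ S) ∪ ⋃ C ∈ {C | IsTorsoComp G X S C ∧ C ≠ D₀}.toFinite.toFinset, C = X := by
  classical
  refine subset_antisymm (union_subset (union_subset hD₀.2 hSX) (iUnion₂_subset fun C hC =>
    ((Set.Finite.mem_toFinset _).1 hC).1.2)) fun v hv => ?_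
  by_cases hvS : v ∈ S
  · exact Or.inl (Or.inr hvS)
  have hC := isTorsoComp_compOutside (G := G) hv hvS
  have hvC := mem_compOutside_self (G := spanningTorso G X) hvS
  by_cases h : compOutside (spanningTorso G X) S v = D₀
  · exact Or.inl (Or.inl (h ▸ hvC))
  · exact Or.inr (mem_biUnion ((Set.Finite.mem_toFinset _).2 ⟨hC, h⟩) hvC)

theorem hasTorsoDecomp_of_isTorsoSep [Finite V]
    (ih : ∀ X' ⊂ X, ∀ M', IsRootedModel G (spanningTorso G X') X' M' → HasTorsoDecomp G X' X' ∅)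
    (hM : IsRootedModel G (spanningTorso G X) X M) (hsep : IsTorsoSep G X Y S Z)
    (hY : Y.Nonempty) (hZ : Z.Nonempty) (hS : S.ncard ≤ 3) (hmin : SepOrderGE G X S.ncard)
    (hbig : S.ncard = 3 → 2 ≤ Y.ncard ∧ 2 ≤ Z.ncard) : HasTorsoDecomp G X X ∅ := by
  classical
  obtain ⟨y, hy⟩ := hY
  obtain ⟨z, hz⟩ := hZ
  have hSX : S ⊆ X := hsep.1 ▸ subset_union_right.trans subset_union_left
  have hyS : y ∉ S := disjoint_left.1 hsep.2.1 hy
  have hzS : z ∉ S := disjoint_right.1 hsep.2.2.2.1 hz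
  have hCy := isTorsoComp_compOutside (G := G) (hsep.left_subset hy) hyS
  have hCz := isTorsoComp_compOutside (G := G) (hsep.right_subset hz) hzS
  have hne : compOutside (spanningTorso G X) S y ≠ compOutside (spanningTorso G X) S z :=
    fun h => disjoint_left.1 hsep.2.2.1 hy <| hsep.symm.subset_of_isTorsoComp hCz
      (mem_compOutside_self hzS) hz (h ▸ mem_compOutside_self hyS)
  have hcomp : ∀ D, IsTorsoComp G X S D → HasTorsoDecomp G (D ∪ S) (D ∪ S) S := fun D hD => by
    obtain ⟨D', hD', hDD'⟩ : ∃ D', IsTorsoComp G X S D' ∧ D ≠ D' := by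
      by_cases h : D = compOutside (spanningTorso G X) S y
      exacts [⟨_, hCz, h ▸ hne⟩, ⟨_, hCy, h⟩]
    exact hasTorsoDecomp_union_of_isTorsoComp ih hM hSX hmin hS hD hD' hDD' fun h3 hall =>
      hsep.two_le_ncard_of_isTorsoComp (hbig h3).1 (hbig h3).2 hall
  set F := {C | IsTorsoComp G X S C ∧ C ≠ compOutside (spanningTorso G X) S y}.toFinite.toFinset
  have hFmem : ∀ {C}, C ∈ F → IsTorsoComp G X S C ∧ C ≠ compOutside (spanningTorso G X) S y :=
    fun hC => by simpa [F] using hC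
  have hF := ((hcomp _ hCy).mono_region (union_subset hCy.2 hSX)).biUnion (F := F) hS
    subset_union_right (fun C hC => disjoint_union_left.2
      ⟨hCy.1.disjoint_of_ne (hFmem hC).1.1 (Ne.symm (hFmem hC).2),
        disjoint_left.2 fun t ht htC => (hFmem hC).1.1.1 htC ht⟩)
    (fun C hC C' hC' hCC' => (hFmem hC).1.1.disjoint_of_ne (hFmem hC').1.1 hCC')
    fun C hC => ⟨hcomp C (hFmem hC).1, union_subset (hFmem hC).1.2 hSX,
      fun _ hu _ huv => (hFmem hC).1.1.mem_or_mem_of_adj hu huv⟩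
  rw [union_biUnion_isTorsoComp_eq hSX hCy] at hF
  exact hF.anti (empty_subset _)

theorem hasTorsoDecomp [Finite V] (hM : IsRootedModel G (spanningTorso G X) X M) :
    HasTorsoDecomp G X X ∅ := by
  induction hn : X.ncard using Nat.strong_induction_on generalizing X M with
  | _ n ih =>
  by_cases hgood : Quasi4Connected (torso G X) ∨ (torso G X = ⊤ ∧ X.ncard ≤ 4)
  · exact hasTorsoDecomp_single ⟨hM.isMinor_torso, hgood⟩
  push Not at hgood
  obtain ⟨Y, S, Z, hsep, hY, hZ, hS, hmin, hbig⟩ :=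
    exists_minimal_isTorsoSep hgood.1 fun h => hgood.2 h.1 |>.not_ge h.2
  exact hasTorsoDecomp_of_isTorsoSep (fun X' hX' M' hM' => ih _ (hn ▸ ncard_lt_ncard hX') hM' rfl)
    hM hsep hY hZ hS hmin hbig

end MainInduction

/-- Every finite simple graph `G` has a tree decomposition of adhesion at
most 3 all of whose torsos are minors of `G` and are quasi-4-connected or complete
graphs on at most 4 vertices. -/
theorem statement0 {V : Type*} [Fintype V] (G : SimpleGraph V) :
    ∃ (ι : Type) (_ : Fintype ι) (T : SimpleGraph ι) (β : ι → Set V),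
      T.IsTree ∧
      (∀ v : V, ∃ t : ι, v ∈ β t) ∧
      (∀ u v : V, G.Adj u v → ∃ t : ι, u ∈ β t ∧ v ∈ β t) ∧
      (∀ v : V, (T.induce {t : ι | v ∈ β t}).Connected) ∧
      (∀ s t : ι, T.Adj s t → (β s ∩ β t).ncard ≤ 3) ∧
      (∀ t : ι, IsMinor (torso G (β t)) G ∧
        (Quasi4Connected (torso G (β t)) ∨
          (torso G (β t) = ⊤ ∧ (β t).ncard ≤ 4))) := by
  obtain ⟨ι, _, T, β, hT, -⟩ := hasTorsoDecomp (G := G) isRootedModel_singleton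
  refine ⟨ι, inferInstance, T, β, hT.isTree, fun v => ?_, fun u v huv => ?_,
    fun v => hT.connected v trivial, hT.adhesion, hT.goodTorso⟩
  · obtain ⟨t, ht⟩ := hT.clique {v} (subset_univ _) (SimpleGraph.isClique_singleton v)
    exact ⟨t, ht rfl⟩
  · obtain ⟨t, ht⟩ := hT.clique {u, v} (subset_univ _)
      ((SimpleGraph.isClique_pair).2 fun _ => by rw [spanningTorso_univ]; exact huv)
    exact ⟨t, ht (mem_insert _ _), ht (mem_insert_of_mem _ rfl)⟩
end

section
/- Let G be a finite simple graph, 𝒯 a G-tangle of order k, and let (Y₁,S₁,Z₁), (Y₂,S₂,Z₂) ∈ 𝒯_min be distinct. Then |(S₁ ∩ Z₂) ∪ (S₁ ∩ S₂) ∪ (Z₁ ∩ S₂)| ≥ k, and moreover S₁ ∩ Z₂ ≠ ∅ and S₂ ∩ Z₁ ≠ ∅. -/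
variable {V : Type*} {W : Type*}

/-!
If the corner separation `(Y₁ ∪ Y₂, S', Z₁ ∩ Z₂)`, with
`S' = (S₁ ∩ Z₂) ∪ (S₁ ∩ S₂) ∪ (Z₁ ∩ S₂)`, had order `< k`, it would lie in the tangle: its
reverse cannot, since by (T2) the big sides `Z₁`, `Z₂`, `Y₁ ∪ Y₂` would have to meet or be joined
by an edge. For separations `S ∪ Z` is the complement of `Y`, so a `⪯`-minimal element of the
tangle has an inclusion-maximal small side; hence `Y₁ = Y₁ ∪ Y₂ = Y₂`. But two minimal elements
with the same small side `Y` coincide, both being above `(Y, S₁ ∩ S₂, Z₁ ∪ Z₂)`.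
If `S₁ ∩ Z₂ = ∅` then `S' ⊆ S₂`, so the corner has order `< k`; symmetrically for `S₂ ∩ Z₁`.
-/

namespace IsSeparation

variable {G : SimpleGraph V} {Y S Z : Set V}

theorem union_eq_compl (h : IsSeparation G Y S Z) : S ∪ Z = Yᶜ := by
  obtain ⟨hYS, hYZ, -, hcover, -⟩ := h
  ext v
  have hv : v ∈ Y ∪ S ∪ Z := hcover ▸ Set.mem_univ v
  simp only [Set.mem_union, Set.mem_compl_iff] at hv ⊢
  exact ⟨fun hSZ hY => hSZ.elim (Set.disjoint_left.1 hYS hY) (Set.disjoint_left.1 hYZ hY),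
    fun hY => by tauto⟩

theorem notMem_of_adj (h : IsSeparation G Y S Z) {y v : V} (hy : y ∈ Y) (hadj : G.Adj y v) :
    y ∉ Z ∧ v ∉ Z :=
  ⟨Set.disjoint_left.1 h.2.1 hy, fun hv => h.2.2.2.2 y hy v hv hadj⟩

theorem sepLE_iff {Y' S' Z' : Set V} (h : IsSeparation G Y S Z)
    (h' : IsSeparation G Y' S' Z') :
    SepLE (Y, S, Z) (Y', S', Z') ↔ Y' ⊂ Y ∨ (Y = Y' ∧ S ⊆ S') := by
  rw [SepLE, h.union_eq_compl, h'.union_eq_compl, compl_inj_iff]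
  exact or_congr_left compl_lt_compl_iff_lt

theorem corner {Y₁ S₁ Z₁ Y₂ S₂ Z₂ : Set V}
    (h₁ : IsSeparation G Y₁ S₁ Z₁) (h₂ : IsSeparation G Y₂ S₂ Z₂) :
    IsSeparation G (Y₁ ∪ Y₂) ((S₁ ∩ Z₂) ∪ (S₁ ∩ S₂) ∪ (Z₁ ∩ S₂)) (Z₁ ∩ Z₂) := by
  obtain ⟨hYS₁, hYZ₁, hSZ₁, hcover₁, hadj₁⟩ := h₁
  obtain ⟨hYS₂, hYZ₂, hSZ₂, hcover₂, hadj₂⟩ := h₂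
  refine ⟨?_, ?_, ?_, ?_, fun y hy z hz => hy.elim (hadj₁ y · z hz.1) (hadj₂ y · z hz.2)⟩
  all_goals
    simp only [Set.disjoint_left, Set.eq_univ_iff_forall, Set.mem_union, Set.mem_inter_iff]
      at *
    grind

theorem inter_union {S₁ Z₁ S₂ Z₂ : Set V}
    (h₁ : IsSeparation G Y S₁ Z₁) (h₂ : IsSeparation G Y S₂ Z₂) :
    IsSeparation G Y (S₁ ∩ S₂) (Z₁ ∪ Z₂) := by
  obtain ⟨hYS₁, hYZ₁, hSZ₁, hcover₁, hadj₁⟩ := h₁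
  obtain ⟨hYS₂, hYZ₂, hSZ₂, hcover₂, hadj₂⟩ := h₂
  refine ⟨?_, ?_, ?_, ?_, fun y hy z hz => hz.elim (hadj₁ y hy z) (hadj₂ y hy z)⟩
  all_goals
    simp only [Set.disjoint_left, Set.eq_univ_iff_forall, Set.mem_union, Set.mem_inter_iff]
      at *
    grind

end IsSeparation

namespace IsTangle

variable {G : SimpleGraph V} {k : ℕ} {T : Set (Set V × Set V × Set V)}

theorem mem_of_subset_union (hT : IsTangle G k T) {Y₁ S₁ Z₁ Y₂ S₂ Z₂ A S B : Set V}
    (h₁ : (Y₁, S₁, Z₁) ∈ T) (h₂ : (Y₂, S₂, Z₂) ∈ T) (hsep : IsSeparation G A S B)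
    (hS : S.ncard < k) (hA : A ⊆ Y₁ ∪ Y₂) : (A, S, B) ∈ T := by
  have sep₁ : IsSeparation G Y₁ S₁ Z₁ := (hT.1 _ h₁).1
  have sep₂ : IsSeparation G Y₂ S₂ Z₂ := (hT.1 _ h₂).1
  refine (hT.2.1 A S B hsep hS).resolve_right fun hrev => ?_
  have edge_free : ∀ u v, G.Adj u v → u ∈ A → ¬ ((u ∈ Z₁ ∨ v ∈ Z₁) ∧ (u ∈ Z₂ ∨ v ∈ Z₂)) := by
    rintro u v huv hu ⟨hZ₁, hZ₂⟩
    rcases hA hu with hY | hY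
    · exact not_or.2 (sep₁.notMem_of_adj hY huv) hZ₁
    · exact not_or.2 (sep₂.notMem_of_adj hY huv) hZ₂
  rcases hT.2.2.1 _ h₁ _ h₂ _ hrev with ⟨x, ⟨hx₁, hx₂⟩, hxA⟩ | ⟨u, v, huv, hZ₁, hZ₂, hu | hv⟩
  · rcases hA hxA with hY | hY
    · exact Set.disjoint_left.1 sep₁.2.1 hY hx₁
    · exact Set.disjoint_left.1 sep₂.2.1 hY hx₂
  · exact edge_free u v huv hu ⟨hZ₁, hZ₂⟩
  · exact edge_free v u huv.symm hv ⟨hZ₁.symm, hZ₂.symm⟩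

theorem fst_eq_of_subset (hT : IsTangle G k T) {Y S Z Y' S' Z' : Set V}
    (hp : IsMinimalIn T (Y, S, Z)) (hq : (Y', S', Z') ∈ T) (hY : Y ⊆ Y') : Y' = Y := by
  by_contra hne
  have hle : SepLE (Y', S', Z') (Y, S, Z) :=
    ((hT.1 _ hq).1.sepLE_iff (hT.1 _ hp.1).1).2 (Or.inl (hY.ssubset_of_ne (Ne.symm hne)))
  exact hne (congrArg Prod.fst (hp.2 _ hq hle))

theorem eq_of_fst_eq [Finite V] (hT : IsTangle G k T) {Y S₁ Z₁ S₂ Z₂ : Set V}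
    (h₁ : IsMinimalIn T (Y, S₁, Z₁)) (h₂ : IsMinimalIn T (Y, S₂, Z₂)) :
    (Y, S₁, Z₁) = (Y, S₂, Z₂) := by
  have sep₁ : IsSeparation G Y S₁ Z₁ := (hT.1 _ h₁.1).1
  have sep₂ : IsSeparation G Y S₂ Z₂ := (hT.1 _ h₂.1).1
  have sep : IsSeparation G Y (S₁ ∩ S₂) (Z₁ ∪ Z₂) := sep₁.inter_union sep₂
  have hmem : (Y, S₁ ∩ S₂, Z₁ ∪ Z₂) ∈ T :=
    hT.mem_of_subset_union h₁.1 h₂.1 sep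
      ((Set.ncard_le_ncard Set.inter_subset_left).trans_lt (hT.1 _ h₁.1).2)
      Set.subset_union_left
  have e₁ := h₁.2 _ hmem ((sep.sepLE_iff sep₁).2 (Or.inr ⟨rfl, Set.inter_subset_left⟩))
  have e₂ := h₂.2 _ hmem ((sep.sepLE_iff sep₂).2 (Or.inr ⟨rfl, Set.inter_subset_right⟩))
  exact e₁.symm.trans e₂

theorem eq_of_ncard_corner_lt [Finite V] (hT : IsTangle G k T) {Y₁ S₁ Z₁ Y₂ S₂ Z₂ : Set V}
    (h₁ : IsMinimalIn T (Y₁, S₁, Z₁)) (h₂ : IsMinimalIn T (Y₂, S₂, Z₂))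
    (hS : ((S₁ ∩ Z₂) ∪ (S₁ ∩ S₂) ∪ (Z₁ ∩ S₂)).ncard < k) :
    (Y₁, S₁, Z₁) = (Y₂, S₂, Z₂) := by
  have hcorner : (Y₁ ∪ Y₂, (S₁ ∩ Z₂) ∪ (S₁ ∩ S₂) ∪ (Z₁ ∩ S₂), Z₁ ∩ Z₂) ∈ T :=
    hT.mem_of_subset_union h₁.1 h₂.1 ((hT.1 _ h₁.1).1.corner (hT.1 _ h₂.1).1) hS subset_rfl
  have hY₁ : Y₁ ∪ Y₂ = Y₁ := hT.fst_eq_of_subset h₁ hcorner Set.subset_union_left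
  have hY₂ : Y₁ ∪ Y₂ = Y₂ := hT.fst_eq_of_subset h₂ hcorner Set.subset_union_right
  obtain rfl : Y₁ = Y₂ := hY₁.symm.trans hY₂
  exact hT.eq_of_fst_eq h₁ h₂

end IsTangle

/-- distinct minimal elements of a tangle of order k satisfy
|(S₁ ∩ Z₂) ∪ (S₁ ∩ S₂) ∪ (Z₁ ∩ S₂)| ≥ k, S₁ ∩ Z₂ ≠ ∅ and S₂ ∩ Z₁ ≠ ∅. -/
theorem statement5 {V : Type*} [Fintype V] (G : SimpleGraph V) (k : ℕ)
    (T : Set (Set V × Set V × Set V)) (hT : IsTangle G k T)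
    (Y₁ S₁ Z₁ Y₂ S₂ Z₂ : Set V)
    (h₁ : IsMinimalIn T (Y₁, S₁, Z₁)) (h₂ : IsMinimalIn T (Y₂, S₂, Z₂))
    (hne : (Y₁, S₁, Z₁) ≠ (Y₂, S₂, Z₂)) :
    k ≤ ((S₁ ∩ Z₂) ∪ (S₁ ∩ S₂) ∪ (Z₁ ∩ S₂)).ncard ∧
      (S₁ ∩ Z₂).Nonempty ∧ (S₂ ∩ Z₁).Nonempty := by
  have hcorner : ¬ ((S₁ ∩ Z₂) ∪ (S₁ ∩ S₂) ∪ (Z₁ ∩ S₂)).ncard < k :=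
    fun h => hne (hT.eq_of_ncard_corner_lt h₁ h₂ h)
  have hsmall {S : Set V} (hsub : (S₁ ∩ Z₂) ∪ (S₁ ∩ S₂) ∪ (Z₁ ∩ S₂) ⊆ S)
      (hS : S.ncard < k) : False :=
    hcorner ((Set.ncard_le_ncard hsub).trans_lt hS)
  refine ⟨not_lt.1 hcorner, Set.nonempty_iff_ne_empty.2 fun h => ?_,
    Set.nonempty_iff_ne_empty.2 fun h => ?_⟩
  · refine hsmall ?_ (hT.1 _ h₂.1).2
    exact Set.union_subset (Set.union_subset (h ▸ Set.empty_subset _) Set.inter_subset_right)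
      Set.inter_subset_right
  · refine hsmall ?_ (hT.1 _ h₁.1).2
    exact Set.union_subset (Set.union_subset Set.inter_subset_left Set.inter_subset_left)
      (Set.inter_comm S₂ Z₁ ▸ h ▸ Set.empty_subset _)
end

section
/- Let G be a finite simple graph, 𝒯 a G-tangle of order k, (Y,S,Z) ∈ 𝒯_min, and (Y',S',Z') ∈ 𝒯 with S' ⊆ S. Then Z ∪ (S ∖ S') ⊆ Z'. -/
variable {V : Type*} {W : Type*}

/-! The meet of two separations (Y,S,Z) and (Y',S',Z') has big side Z ∩ Z' and separator
((S ∪ Z) ∩ (S' ∪ Z')) \ (Z ∩ Z') ⊆ S ∪ S'. If both lie in the tangle and the meet has order < k,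
then the meet lies in the tangle too: its reverse would violate (T2) together with the two of them.
When S' ⊆ S the meet has order ≤ |S| and is ⪯ (Y,S,Z), so minimality makes it equal to (Y,S,Z);
hence Z ⊆ Z' and S ⊆ S' ∪ Z'. -/

def sepMeet (p q : Set V × Set V × Set V) : Set V × Set V × Set V :=
  (((p.2.1 ∪ p.2.2) ∩ (q.2.1 ∪ q.2.2))ᶜ,
    ((p.2.1 ∪ p.2.2) ∩ (q.2.1 ∪ q.2.2)) \ (p.2.2 ∩ q.2.2), p.2.2 ∩ q.2.2)

namespace IsSeparation

variable {G : SimpleGraph V} {Y S Z : Set V}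

theorem mem_left_iff (h : IsSeparation G Y S Z) {x : V} : x ∈ Y ↔ x ∉ S ∪ Z := by
  obtain ⟨hYS, hYZ, -, huniv, -⟩ := h
  have hx : x ∈ Y ∪ S ∪ Z := huniv ▸ Set.mem_univ x
  constructor
  · rintro hxY (hxS | hxZ)
    · exact hYS.notMem_of_mem_left hxY hxS
    · exact hYZ.notMem_of_mem_left hxY hxZ
  · intro hxSZ
    rcases hx with (hxY | hxS) | hxZ
    exacts [hxY, absurd (Or.inl hxS) hxSZ, absurd (Or.inr hxZ) hxSZ]

theorem not_adj_of_notMem (h : IsSeparation G Y S Z) {u v : V} (hu : u ∉ S ∪ Z)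
    (hv : v ∈ Z) : ¬ G.Adj u v :=
  h.2.2.2.2 u (h.mem_left_iff.2 hu) v hv

theorem not_adj_of_notMem_inter {Y' S' Z' : Set V} (h : IsSeparation G Y S Z)
    (h' : IsSeparation G Y' S' Z') {u v : V} (hu : u ∉ (S ∪ Z) ∩ (S' ∪ Z'))
    (hZ : u ∈ Z ∨ v ∈ Z) (hZ' : u ∈ Z' ∨ v ∈ Z') : ¬ G.Adj u v := by
  rw [Set.mem_inter_iff, not_and_or] at hu
  rcases hu with hu | hu
  · exact h.not_adj_of_notMem hu (hZ.resolve_left fun huZ => hu (Or.inr huZ))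
  · exact h'.not_adj_of_notMem hu (hZ'.resolve_left fun huZ => hu (Or.inr huZ))

end IsSeparation

section

variable {G : SimpleGraph V} {p q : Set V × Set V × Set V}

theorem isSeparation_sepMeet (hp : IsSeparation G p.1 p.2.1 p.2.2)
    (hq : IsSeparation G q.1 q.2.1 q.2.2) :
    IsSeparation G (sepMeet p q).1 (sepMeet p q).2.1 (sepMeet p q).2.2 := by
  have hZB : p.2.2 ∩ q.2.2 ⊆ (p.2.1 ∪ p.2.2) ∩ (q.2.1 ∪ q.2.2) :=
    Set.inter_subset_inter Set.subset_union_right Set.subset_union_right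
  refine ⟨disjoint_compl_left.mono_right Set.sdiff_subset,
    disjoint_compl_left.mono_right hZB, Set.disjoint_sdiff_left, ?_, ?_⟩
  · rw [sepMeet, Set.union_assoc, Set.sdiff_union_of_subset hZB, Set.compl_union_self]
  · intro u hu v hv
    exact hp.not_adj_of_notMem_inter hq hu (Or.inr hv.1) (Or.inr hv.2)

theorem sepMeet_separator_subset : (sepMeet p q).2.1 ⊆ p.2.1 ∪ q.2.1 := by
  rintro x ⟨⟨hxS | hxZ, hxS' | hxZ'⟩, hx⟩
  exacts [Or.inl hxS, Or.inl hxS, Or.inr hxS', absurd ⟨hxZ, hxZ'⟩ hx]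

theorem sepMeet_separator_union_subset :
    (sepMeet p q).2.1 ∪ (sepMeet p q).2.2 ⊆ p.2.1 ∪ p.2.2 := by
  rintro x (hx | hx)
  exacts [hx.1.1, Or.inr hx.1]

theorem sepLE_of_subset (hSZ : p.2.1 ∪ p.2.2 ⊆ q.2.1 ∪ q.2.2) (hS : p.2.1 ⊆ q.2.1) :
    SepLE p q :=
  hSZ.ssubset_or_eq.imp id fun h => ⟨h, hS⟩

theorem IsTangle.sepMeet_mem {k : ℕ} {T : Set (Set V × Set V × Set V)} (hT : IsTangle G k T)
    (hp : p ∈ T) (hq : q ∈ T) (hord : (sepMeet p q).2.1.ncard < k) : sepMeet p q ∈ T := by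
  have hpsep := (hT.1 p hp).1
  have hqsep := (hT.1 q hq).1
  refine (hT.2.1 _ _ _ (isSeparation_sepMeet hpsep hqsep) hord).resolve_right fun hr => ?_
  rcases hT.2.2.1 p hp q hq _ hr with ⟨x, ⟨hxZ, hxZ'⟩, hxY⟩ | ⟨u, v, huv, hZ, hZ', hu | hv⟩
  · exact hxY ⟨Or.inr hxZ, Or.inr hxZ'⟩
  · exact hpsep.not_adj_of_notMem_inter hqsep hu hZ hZ' huv
  · exact hpsep.not_adj_of_notMem_inter hqsep hv hZ.symm hZ'.symm huv.symm

end

/-- If (Y,S,Z) ∈ 𝒯_min and (Y',S',Z') ∈ 𝒯 with S' ⊆ S, then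
Z ∪ (S ∖ S') ⊆ Z'. -/
theorem statement6 {V : Type*} [Fintype V] (G : SimpleGraph V) (k : ℕ)
    (T : Set (Set V × Set V × Set V)) (hT : IsTangle G k T)
    (Y S Z Y' S' Z' : Set V)
    (h : IsMinimalIn T (Y, S, Z)) (h' : (Y', S', Z') ∈ T) (hss : S' ⊆ S) :
    Z ∪ (S \ S') ⊆ Z' := by
  set p : Set V × Set V × Set V := (Y, S, Z)
  set q : Set V × Set V × Set V := (Y', S', Z')
  have hS : (sepMeet p q).2.1 ⊆ S :=
    sepMeet_separator_subset.trans (Set.union_subset subset_rfl hss)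
  have hord : (sepMeet p q).2.1.ncard < k :=
    (Set.ncard_le_ncard hS (Set.toFinite S)).trans_lt (hT.1 p h.1).2
  have hmeet : sepMeet p q = p :=
    h.2 _ (hT.sepMeet_mem h.1 h' hord) (sepLE_of_subset sepMeet_separator_union_subset hS)
  have hZ : Z ∩ Z' = Z := congrArg (·.2.2) hmeet
  have hSeq : (sepMeet p q).2.1 = S := congrArg (·.2.1) hmeet
  rintro x (hx | ⟨hxS, hxS'⟩)
  · exact (hZ.ge hx).2
  · exact (hSeq.ge hxS).1.2.resolve_left hxS'
end
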